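/- arXiv:2302.09348 — 9 statements merged into one kernel-verified Lean document; each statement's English description precedes it below -/
import Mathlib

section
/- For every t ∈ T_im, the vector a(t) belongs to cone({b(k,j) : k ∈ M(j), j ∈ J}). -/
open Matrix Set Pointwise
open scoped Classical

noncomputable section

/-- The conic hull of a set: all finite nonnegative linear combinations of its elements. -/
def coneOf {E : Type*} [AddCommMonoid E] [Module ℝ E] (S : Set E) : Set E :=
  {x | ∃ (k : ℕ) (c : Fin k → ℝ) (v : Fin k → E),
    (∀ i, 0 ≤ c i) ∧ (∀ i, v i ∈ S) ∧ x = ∑ i, c i • v i}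

/-- The copositive cone: matrices `D` with `tᵀ D t ≥ 0` for all componentwise-nonnegative `t`. -/
def COP (p : ℕ) : Set (Matrix (Fin p) (Fin p) ℝ) :=
  {D | ∀ t : Fin p → ℝ, (∀ k, 0 ≤ t k) → 0 ≤ t ⬝ᵥ D.mulVec t}

/-- The completely positive cone: `conv {t tᵀ : t ≥ 0}`. -/
def CPcone (p : ℕ) : Set (Matrix (Fin p) (Fin p) ℝ) :=
  convexHull ℝ {U | ∃ t : Fin p → ℝ, (∀ k, 0 ≤ t k) ∧ U = vecMulVec t t}

/-- The standard simplex `T`. -/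
def simplexT (p : ℕ) : Set (Fin p → ℝ) :=
  {t | (∀ k, 0 ≤ t k) ∧ ∑ k, t k = 1}

/-- The constraint matrix `𝒜(x) = A₀ + Σ_{m=1}^n x_m A_m`. -/
def slack {n p : ℕ} (A : Fin (n + 1) → Matrix (Fin p) (Fin p) ℝ) (x : Fin n → ℝ) :
    Matrix (Fin p) (Fin p) ℝ :=
  A 0 + ∑ m : Fin n, x m • A m.succ

/-- The feasible set `X = {x : 𝒜(x) ∈ COP^p}`. -/
def feasX {n p : ℕ} (A : Fin (n + 1) → Matrix (Fin p) (Fin p) ℝ) : Set (Fin n → ℝ) :=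
  {x | slack A x ∈ COP p}

/-- The set of normalized immobile indices `T_im`. -/
def Tim {n p : ℕ} (A : Fin (n + 1) → Matrix (Fin p) (Fin p) ℝ) : Set (Fin p → ℝ) :=
  {t | t ∈ simplexT p ∧ ∀ x ∈ feasX A, t ⬝ᵥ (slack A x).mulVec t = 0}

/-- `a(t) = (tᵀ A_m t)_{m=0}^n`. -/
def avec {n p : ℕ} (A : Fin (n + 1) → Matrix (Fin p) (Fin p) ℝ) (t : Fin p → ℝ) :
    Fin (n + 1) → ℝ :=
  fun m => t ⬝ᵥ (A m).mulVec t

/-- `b(k,j) = (e_kᵀ A_m τ(j))_{m=0}^n`. -/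
def bvec {n p : ℕ} {J : Type*} (A : Fin (n + 1) → Matrix (Fin p) (Fin p) ℝ)
    (τ : J → Fin p → ℝ) (k : Fin p) (j : J) : Fin (n + 1) → ℝ :=
  fun m => (A m).mulVec (τ j) k

/-- `M(j) = {k : e_kᵀ 𝒜(x) τ(j) = 0 for all x ∈ X}`. -/
def Mset {n p : ℕ} {J : Type*} (A : Fin (n + 1) → Matrix (Fin p) (Fin p) ℝ)
    (τ : J → Fin p → ℝ) (j : J) : Set (Fin p) :=
  {k | ∀ x ∈ feasX A, (slack A x).mulVec (τ j) k = 0}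

/-- `N_*(j) = {k : e_kᵀ 𝒜(x) τ(j) = 0 for some x ∈ X}`. -/
def Nstar {n p : ℕ} {J : Type*} (A : Fin (n + 1) → Matrix (Fin p) (Fin p) ℝ)
    (τ : J → Fin p → ℝ) (j : J) : Set (Fin p) :=
  {k | ∃ x ∈ feasX A, (slack A x).mulVec (τ j) k = 0}

/-- `B(z) = Σ_{m=0}^n z_m A_m`. -/
def Bmat {n p : ℕ} (A : Fin (n + 1) → Matrix (Fin p) (Fin p) ℝ) (z : Fin (n + 1) → ℝ) :
    Matrix (Fin p) (Fin p) ℝ :=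
  ∑ m, z m • A m

/-- The system `𝒜(x) ∈ COP^p` yields uniform LP duality: for each cost vector `c` for which the
primal value is finite, the Lagrange dual problem is attained with zero duality gap. -/
def UniformLPDuality {n p : ℕ} (A : Fin (n + 1) → Matrix (Fin p) (Fin p) ℝ) : Prop :=
  ∀ c : Fin n → ℝ,
    BddBelow ((fun x => ∑ i, c i * x i) '' feasX A) →
    ∃ U ∈ CPcone p, (∀ m : Fin n, (A m.succ * U).trace = c m) ∧
      (A 0 * U).trace = -sInf ((fun x => ∑ i, c i * x i) '' feasX A)

/-- `Y` is a maximum slack in the system `𝒜(x) ∈ COP^p`: it lies in the relative interior of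
`D = {𝒜(x) : x ∈ X}`. -/
def maxSlack {n p : ℕ} (A : Fin (n + 1) → Matrix (Fin p) (Fin p) ℝ)
    (Y : Matrix (Fin p) (Fin p) ℝ) : Prop :=
  Y ∈ intrinsicInterior ℝ {D | ∃ x ∈ feasX A, D = slack A x}

lemma mem_coneOf {E : Type*} [AddCommMonoid E] [Module ℝ E] {S : Set E}
    {ι : Type*} [Fintype ι] (c : ι → ℝ) (v : ι → E)
    (hc : ∀ i, 0 ≤ c i) (hv : ∀ i, c i ≠ 0 → v i ∈ S) :
    (∑ i, c i • v i) ∈ coneOf S := by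
  classical
  set F := Finset.univ.filter (fun i => c i ≠ 0) with hF
  have hsum : ∑ i, c i • v i = ∑ i ∈ F, c i • v i := by
    rw [Finset.sum_filter_of_ne]
    intro i _ h
    by_contra hci
    exact h (by simp [not_not.mp (by simpa [hF] using hci)])
  have e := F.equivFin
  refine ⟨F.card, fun i => c (e.symm i).1, fun i => v (e.symm i).1, fun i => hc _,
    fun i => hv _ (Finset.mem_filter.mp (e.symm i).2).2, ?_⟩
  rw [hsum, ← Finset.sum_attach F (fun i => c i • v i)]
  exact (Equiv.sum_comp e.symm (fun a => c a.1 • v a.1)).symm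

/-- For every `t ∈ T_im`, `a(t) ∈ cone {b(k,j) : k ∈ M(j), j ∈ J}`. -/
theorem stmt_1
    {n p : ℕ} (hp : 1 < p) (hn : 1 ≤ n)
    (A : Fin (n + 1) → Matrix (Fin p) (Fin p) ℝ) (hA : ∀ m, (A m).IsSymm)
    (hX : (feasX A).Nonempty)
    (hTim : (Tim A).Nonempty)
    (J : Type) [Fintype J] [Nonempty J]
    (τ : J → Fin p → ℝ) (hτinj : Function.Injective τ)
    (hτ : Set.range τ = Set.extremePoints ℝ (convexHull ℝ (Tim A)))
    (S : Type) [Fintype S] (Jset : S → Set J)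
    (hJne : ∀ s, (Jset s).Nonempty)
    (hJdisj : ∀ s s', s ≠ s' → Disjoint (Jset s) (Jset s'))
    (hJcover : (⋃ s, Jset s) = Set.univ)
    (hTimU : Tim A = ⋃ s, convexHull ℝ (τ '' Jset s))
    (hPsub : ∀ s, ∀ j ∈ Jset s, {k : Fin p | ∃ j' ∈ Jset s, 0 < τ j' k} ⊆ Mset A τ j)
    (t : Fin p → ℝ) (ht : t ∈ Tim A) :
    avec A t ∈
      coneOf {v : Fin (n + 1) → ℝ | ∃ j k, k ∈ Mset A τ j ∧ v = bvec A τ k j} := by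
  obtain ⟨s, hts⟩ : ∃ s, t ∈ convexHull ℝ (τ '' Jset s) := by
    have h := ht; rw [hTimU] at h; simpa using h
  rw [mem_convexHull_iff_exists_fintype] at hts
  obtain ⟨ι, _, w, z, hw0, hw1, hz, hzt⟩ := hts
  choose j hjJ hjz using hz
  have htnn : ∀ k, 0 ≤ t k := ht.1.1
  have key : avec A t = ∑ q : ι × Fin p, (w q.1 * t q.2) • bvec A τ q.2 (j q.1) := by
    funext m
    have hmv : (A m).mulVec t = ∑ i, w i • (A m).mulVec (z i) := by
      rw [← hzt]
      simp [Matrix.mulVec_sum, Matrix.mulVec_smul]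
    simp only [avec, bvec, Fintype.sum_prod_type, Finset.sum_apply, Pi.smul_apply, smul_eq_mul]
    rw [hmv]
    simp only [dotProduct, Finset.sum_apply, Pi.smul_apply, smul_eq_mul, Finset.mul_sum]
    rw [Finset.sum_comm]
    refine Finset.sum_congr rfl fun i _ => Finset.sum_congr rfl fun k _ => ?_
    rw [hjz i]; ring
  rw [key]
  apply mem_coneOf
  · exact fun q => mul_nonneg (hw0 q.1) (htnn q.2)
  · intro q hq
    refine ⟨j q.1, q.2, ?_, rfl⟩
    apply hPsub s (j q.1) (hjJ q.1)
    have htk : 0 < t q.2 :=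
      (htnn q.2).lt_of_ne fun h => hq (by rw [← h, mul_zero])
    have htk2 : 0 < ∑ i, w i * z i q.2 := by
      have : t q.2 = ∑ i, w i * z i q.2 := by
        rw [← hzt]; simp
      rwa [this] at htk
    obtain ⟨i, -, hi⟩ : ∃ i ∈ Finset.univ, 0 < w i * z i q.2 := by
      by_contra hcon
      push_neg at hcon
      exact absurd (Finset.sum_nonpos fun i hi => hcon i hi) (not_le.mpr htk2)
    have hzpos : 0 < z i q.2 := by
      rcases lt_or_ge 0 (z i q.2) with h | h
      · exact h
      · exact absurd (mul_nonpos_of_nonneg_of_nonpos (hw0 i) h) (not_le.mpr hi)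
    exact ⟨j i, hjJ i, by rw [hjz i]; exact hzpos⟩
end
end

section
/- Condition A1) holds if and only if there exist a finite index set I, numbers α_i > 0 and vectors t(i) ∈ T_im, i ∈ I, such that the matrix U* := Σ_{i∈I} α_i t(i)t(i)ᵀ + (1/4) Σ_{(l,q)∈V_0} (τ(l)+τ(q))(τ(l)+τ(q))ᵀ satisfies A_m • U* = 0 for all m = 0,1,...,n (such U* automatically lies in CP^p). -/
open Matrix Set Pointwise
open scoped Classical

noncomputable section

section ConeLemmas

variable {E : Type*} [AddCommGroup E] [Module ℝ E] {S : Set E}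

lemma zero_mem_coneOf : (0 : E) ∈ coneOf S :=
  ⟨0, fun i => i.elim0, fun i => i.elim0, fun i => i.elim0, fun i => i.elim0, by simp⟩

lemma mem_coneOf_s6 {a : E} (ha : a ∈ S) : a ∈ coneOf S :=
  ⟨1, fun _ => 1, fun _ => a, fun _ => zero_le_one, fun _ => ha, by simp⟩

lemma coneOf_add {x y : E} (hx : x ∈ coneOf S) (hy : y ∈ coneOf S) : x + y ∈ coneOf S := by
  obtain ⟨k1, c1, v1, hc1, hv1, rfl⟩ := hx
  obtain ⟨k2, c2, v2, hc2, hv2, rfl⟩ := hy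
  refine ⟨k1 + k2, Fin.append c1 c2, Fin.append v1 v2, ?_, ?_, ?_⟩
  · intro i
    refine Fin.addCases (fun j => ?_) (fun j => ?_) i <;>
      simp [Fin.append_left, Fin.append_right, hc1, hc2]
  · intro i
    refine Fin.addCases (fun j => ?_) (fun j => ?_) i <;>
      simp [Fin.append_left, Fin.append_right, hv1, hv2]
  · rw [Fin.sum_univ_add]
    simp [Fin.append_left, Fin.append_right]

lemma coneOf_smul {r : ℝ} (hr : 0 ≤ r) {x : E} (hx : x ∈ coneOf S) : r • x ∈ coneOf S := by
  obtain ⟨k, c, v, hc, hv, rfl⟩ := hx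
  refine ⟨k, fun i => r * c i, v, fun i => mul_nonneg hr (hc i), hv, ?_⟩
  rw [Finset.smul_sum]
  exact Finset.sum_congr rfl fun i _ => (mul_smul r (c i) (v i)).symm

lemma coneOf_sum {ι : Type*} (s : Finset ι) (f : ι → E) (hf : ∀ i ∈ s, f i ∈ coneOf S) :
    ∑ i ∈ s, f i ∈ coneOf S := by
  classical
  induction s using Finset.induction_on with
  | empty => simpa using (zero_mem_coneOf (S := S))
  | @insert a s hni ih =>
    rw [Finset.sum_insert hni]
    exact coneOf_add (hf _ (Finset.mem_insert_self _ _))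
      (ih fun i hi => hf i (Finset.mem_insert_of_mem hi))

end ConeLemmas

section MatLemmas

lemma trace_A_vecMulVec {p : ℕ} (A : Matrix (Fin p) (Fin p) ℝ) (t u : Fin p → ℝ) :
    (A * vecMulVec t u).trace = u ⬝ᵥ A.mulVec t := by
  simp only [Matrix.trace, Matrix.diag, Matrix.mul_apply, Matrix.vecMulVec_apply,
    dotProduct, Matrix.mulVec, Finset.mul_sum]
  refine Finset.sum_congr rfl fun i _ => Finset.sum_congr rfl fun j _ => by ring

lemma sum_dot' {p : ℕ} {ι : Type*} (s : Finset ι) (f : ι → Fin p → ℝ) (v : Fin p → ℝ) :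
    (∑ i ∈ s, f i) ⬝ᵥ v = ∑ i ∈ s, f i ⬝ᵥ v := by
  simp only [dotProduct, Finset.sum_apply, Finset.sum_mul]
  rw [Finset.sum_comm]

lemma dot_sum' {p : ℕ} {ι : Type*} (s : Finset ι) (v : Fin p → ℝ) (f : ι → Fin p → ℝ) :
    v ⬝ᵥ (∑ i ∈ s, f i) = ∑ i ∈ s, v ⬝ᵥ f i := by
  simp only [dotProduct, Finset.sum_apply, Finset.mul_sum]
  rw [Finset.sum_comm]

lemma mulVec_sum' {p : ℕ} {ι : Type*} (s : Finset ι) (A : Matrix (Fin p) (Fin p) ℝ)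
    (f : ι → Fin p → ℝ) : A.mulVec (∑ i ∈ s, f i) = ∑ i ∈ s, A.mulVec (f i) := by
  funext k
  simp only [Matrix.mulVec, Finset.sum_apply]
  exact dot_sum' s _ f

lemma dot_expand {p : ℕ} {ι : Type*} [Fintype ι] (A : Matrix (Fin p) (Fin p) ℝ)
    (w : ι → ℝ) (u : ι → Fin p → ℝ) :
    (∑ j, w j • u j) ⬝ᵥ A.mulVec (∑ j, w j • u j) =
      ∑ j, ∑ j', (w j * w j') * (u j ⬝ᵥ A.mulVec (u j')) := by
  rw [sum_dot']
  refine Finset.sum_congr rfl fun j _ => ?_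
  rw [smul_dotProduct, mulVec_sum', dot_sum', Finset.smul_sum]
  refine Finset.sum_congr rfl fun j' _ => ?_
  rw [Matrix.mulVec_smul, dotProduct_smul]
  simp only [smul_eq_mul]
  ring

lemma avec_smul {n p : ℕ} (A : Fin (n + 1) → Matrix (Fin p) (Fin p) ℝ) (r : ℝ)
    (u : Fin p → ℝ) : avec A (r • u) = (r * r) • avec A u := by
  funext m
  simp only [avec, smul_dotProduct, Matrix.mulVec_smul, dotProduct_smul, Pi.smul_apply,
    smul_eq_mul]
  ring

lemma trace_formula {n p : ℕ} {J : Type*} [Fintype J] (A : Fin (n + 1) → Matrix (Fin p) (Fin p) ℝ)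
    (τ : J → Fin p → ℝ) (coef : J → J → ℝ) (N : ℕ) (α : Fin N → ℝ) (t : Fin N → Fin p → ℝ)
    (m : Fin (n + 1)) :
    (A m * (∑ i, α i • vecMulVec (t i) (t i) +
        ∑ l : J, ∑ q : J, coef l q • vecMulVec (τ l + τ q) (τ l + τ q))).trace
      = ∑ i, α i * avec A (t i) m + ∑ l, ∑ q, coef l q * avec A (τ l + τ q) m := by
  simp only [Matrix.mul_add, Matrix.trace_add, Matrix.mul_sum, Matrix.trace_sum,
    Matrix.mul_smul, Matrix.trace_smul, smul_eq_mul, trace_A_vecMulVec, avec]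

lemma combo {ι : Type*} [Fintype ι] (w : ι → ℝ) (c : ι → ι → ℝ) (hw1 : ∑ i, w i = 1) :
    ∑ i, w i * c i i +
      ∑ i, ∑ i', (2 * (w i * w i')) * (-((1 / 4) * (c i i + c i i' + c i' i + c i' i'))) =
    -∑ i, ∑ i', (w i * w i') * c i i' := by
  have hdiag : ∀ d : ι → ℝ, ∑ i, ∑ i', (w i * w i') * d i = ∑ i, w i * d i := by
    intro d
    refine Finset.sum_congr rfl fun i _ => ?_
    calc ∑ i', (w i * w i') * d i = ∑ i', (w i * d i) * w i' :=
          Finset.sum_congr rfl fun i' _ => by ring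
      _ = (w i * d i) * ∑ i', w i' := (Finset.mul_sum _ _ _).symm
      _ = w i * d i := by rw [hw1, mul_one]
  have hdiag2 : ∑ i, ∑ i', (w i * w i') * c i' i' = ∑ i, w i * c i i := by
    rw [Finset.sum_comm]
    calc ∑ i', ∑ i, (w i * w i') * c i' i' = ∑ i', ∑ i, (w i' * w i) * c i' i' :=
          Finset.sum_congr rfl fun i' _ => Finset.sum_congr rfl fun i _ => by ring
      _ = ∑ i, w i * c i i := hdiag _
  have hswap : ∑ i, ∑ i', (w i * w i') * c i' i = ∑ i, ∑ i', (w i * w i') * c i i' := by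
    rw [Finset.sum_comm]
    exact Finset.sum_congr rfl fun i _ => Finset.sum_congr rfl fun i' _ => by ring
  have pull : ∀ d : ι → ι → ℝ,
      ∑ i, ∑ i', (-(1 / 2) : ℝ) * d i i' = -(1 / 2) * ∑ i, ∑ i', d i i' := by
    intro d
    rw [Finset.mul_sum]
    exact Finset.sum_congr rfl fun i _ => (Finset.mul_sum _ _ _).symm
  have step : ∑ i, ∑ i', (2 * (w i * w i')) * (-((1 / 4) * (c i i + c i i' + c i' i + c i' i')))
      = -(1 / 2) * (∑ i, ∑ i', (w i * w i') * c i i)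
        + -(1 / 2) * (∑ i, ∑ i', (w i * w i') * c i i')
        + -(1 / 2) * (∑ i, ∑ i', (w i * w i') * c i' i)
        + -(1 / 2) * (∑ i, ∑ i', (w i * w i') * c i' i') := by
    rw [← pull, ← pull, ← pull, ← pull]
    simp only [← Finset.sum_add_distrib]
    exact Finset.sum_congr rfl fun i _ => Finset.sum_congr rfl fun i' _ => by ring
  rw [step, hdiag fun i => c i i, hdiag2, hswap]
  ring

/-- Condition A1) holds iff there is `U* = Σ αᵢ t(i)t(i)ᵀ + (1/4) Σ_{(l,q)∈V₀}
(τ(l)+τ(q))(τ(l)+τ(q))ᵀ` with `αᵢ > 0`, `t(i) ∈ T_im`, satisfying `A_m • U* = 0` for all `m`. -/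
theorem stmt_6
    {n p : ℕ} (hp : 1 < p) (hn : 1 ≤ n)
    (A : Fin (n + 1) → Matrix (Fin p) (Fin p) ℝ) (hA : ∀ m, (A m).IsSymm)
    (hX : (feasX A).Nonempty)
    (hTim : (Tim A).Nonempty)
    (J : Type) [Fintype J] [Nonempty J]
    (τ : J → Fin p → ℝ) (hτinj : Function.Injective τ)
    (hτ : Set.range τ = Set.extremePoints ℝ (convexHull ℝ (Tim A)))
    (S : Type) [Fintype S] (Jset : S → Set J)
    (hJne : ∀ s, (Jset s).Nonempty)
    (hJdisj : ∀ s s', s ≠ s' → Disjoint (Jset s) (Jset s'))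
    (hJcover : (⋃ s, Jset s) = Set.univ)
    (hTimU : Tim A = ⋃ s, convexHull ℝ (τ '' Jset s))
    (hPsub : ∀ s, ∀ j ∈ Jset s, {k : Fin p | ∃ j' ∈ Jset s, 0 < τ j' k} ⊆ Mset A τ j) :
    (∃ W : Submodule ℝ (Fin (n + 1) → ℝ),
        (W : Set (Fin (n + 1) → ℝ)) = coneOf (avec A '' Tim A)) ↔
      ∃ (N : ℕ) (α : Fin N → ℝ) (t : Fin N → Fin p → ℝ),
        (∀ i, 0 < α i) ∧ (∀ i, t i ∈ Tim A) ∧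
        (∀ m, (A m *
          (∑ i, α i • vecMulVec (t i) (t i) +
            ∑ l : J, ∑ q : J,
              (if ∃ s, l ∈ Jset s ∧ q ∈ Jset s then (1 / 4 : ℝ) else 0) •
                vecMulVec (τ l + τ q) (τ l + τ q))).trace = 0) := by
  classical
  set C : Set (Fin (n + 1) → ℝ) := coneOf (avec A '' Tim A) with hC
  have hτTim : ∀ j : J, τ j ∈ Tim A := by
    intro j
    have hj : j ∈ ⋃ s, Jset s := by rw [hJcover]; trivial
    obtain ⟨s, hs⟩ := Set.mem_iUnion.mp hj
    rw [hTimU]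
    exact Set.mem_iUnion.mpr ⟨s, subset_convexHull ℝ _ ⟨j, hs, rfl⟩⟩
  have hmidTim : ∀ l q : J, (∃ s, l ∈ Jset s ∧ q ∈ Jset s) →
      (1 / 2 : ℝ) • (τ l + τ q) ∈ Tim A := by
    rintro l q ⟨s, hl, hq⟩
    have h1 : τ l ∈ convexHull ℝ (τ '' Jset s) := subset_convexHull ℝ _ ⟨l, hl, rfl⟩
    have h2 : τ q ∈ convexHull ℝ (τ '' Jset s) := subset_convexHull ℝ _ ⟨q, hq, rfl⟩
    have hmem := (convex_convexHull ℝ (τ '' Jset s)) h1 h2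
      (by norm_num : (0:ℝ) ≤ 1/2) (by norm_num : (0:ℝ) ≤ 1/2) (by norm_num)
    rw [hTimU]
    refine Set.mem_iUnion.mpr ⟨s, ?_⟩
    have heq : (1 / 2 : ℝ) • (τ l + τ q) = (1/2 : ℝ) • τ l + (1/2 : ℝ) • τ q := by
      rw [smul_add]
    rw [heq]
    exact hmem
  have hG : ∀ l q : J,
      (if ∃ s, l ∈ Jset s ∧ q ∈ Jset s then (1 / 4 : ℝ) else 0) • avec A (τ l + τ q) ∈ C := by
    intro l q
    by_cases h : ∃ s, l ∈ Jset s ∧ q ∈ Jset s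
    · rw [if_pos h]
      have h14 : avec A ((1 / 2 : ℝ) • (τ l + τ q)) = (1 / 4 : ℝ) • avec A (τ l + τ q) := by
        rw [avec_smul]; norm_num
      rw [← h14]
      exact mem_coneOf_s6 ⟨_, hmidTim l q h, rfl⟩
    · rw [if_neg h, zero_smul]
      exact zero_mem_coneOf
  constructor
  · -- A1) ⇒ existence of U*
    rintro ⟨W, hW⟩
    have hSgC : (∑ l : J, ∑ q : J,
        (if ∃ s, l ∈ Jset s ∧ q ∈ Jset s then (1 / 4 : ℝ) else 0) • avec A (τ l + τ q)) ∈ C :=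
      coneOf_sum _ _ fun l _ => coneOf_sum _ _ fun q _ => hG l q
    have hSgW : (∑ l : J, ∑ q : J,
        (if ∃ s, l ∈ Jset s ∧ q ∈ Jset s then (1 / 4 : ℝ) else 0) • avec A (τ l + τ q)) ∈ W := by
      rw [← SetLike.mem_coe, hW]; exact hSgC
    have hnegW : -(∑ l : J, ∑ q : J,
        (if ∃ s, l ∈ Jset s ∧ q ∈ Jset s then (1 / 4 : ℝ) else 0) • avec A (τ l + τ q)) ∈ C := by
      rw [← hW, SetLike.mem_coe]; exact neg_mem hSgW
    obtain ⟨k, c, v, hc, hv, hsum⟩ := hnegW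
    choose tt htt1 htt2 using fun i => hv i
    set Pos : Finset (Fin k) := Finset.univ.filter (fun i => 0 < c i) with hPos
    refine ⟨Fintype.card ↥Pos, fun j => c ((Fintype.equivFin ↥Pos).symm j : Fin k),
      fun j => tt ((Fintype.equivFin ↥Pos).symm j : Fin k), ?_, ?_, ?_⟩
    · intro j
      exact (Finset.mem_filter.mp ((Fintype.equivFin ↥Pos).symm j).2).2
    · intro j; exact htt1 _
    · intro m
      have hmain : ∑ j : Fin (Fintype.card ↥Pos),
          c ((Fintype.equivFin ↥Pos).symm j : Fin k) •
            avec A (tt ((Fintype.equivFin ↥Pos).symm j : Fin k)) = ∑ i, c i • v i := by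
        rw [Equiv.sum_comp (Fintype.equivFin ↥Pos).symm
          (fun i : ↥Pos => c (i : Fin k) • avec A (tt (i : Fin k)))]
        rw [Finset.sum_coe_sort Pos (fun i => c i • avec A (tt i))]
        calc ∑ i ∈ Pos, c i • avec A (tt i) = ∑ i ∈ Pos, c i • v i :=
              Finset.sum_congr rfl fun i _ => by rw [htt2 i]
          _ = ∑ i, c i • v i := by
              refine Finset.sum_subset (Finset.subset_univ _) fun i _ hi => ?_
              have hnp : ¬ 0 < c i := fun h =>
                hi (Finset.mem_filter.mpr ⟨Finset.mem_univ i, h⟩)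
              rw [le_antisymm (not_lt.mp hnp) (hc i), zero_smul]
      rw [trace_formula A τ (fun l q => if ∃ s, l ∈ Jset s ∧ q ∈ Jset s then (1 / 4 : ℝ) else 0)]
      have h1 : ∑ j : Fin (Fintype.card ↥Pos),
          c ((Fintype.equivFin ↥Pos).symm j : Fin k) •
            avec A (tt ((Fintype.equivFin ↥Pos).symm j : Fin k)) =
          -(∑ l : J, ∑ q : J,
            (if ∃ s, l ∈ Jset s ∧ q ∈ Jset s then (1 / 4 : ℝ) else 0) • avec A (τ l + τ q)) := by
        rw [hmain, ← hsum]
      have h2 := congrFun h1 m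
      simp only [Finset.sum_apply, Pi.smul_apply, Pi.neg_apply, smul_eq_mul] at h2
      rw [h2]
      exact neg_add_cancel _
  · -- existence of U* ⇒ A1)
    rintro ⟨N, α, t, hα, ht, htr⟩
    have hrelv : (∑ i, α i • avec A (t i)) + ∑ l : J, ∑ q : J,
        (if ∃ s, l ∈ Jset s ∧ q ∈ Jset s then (1 / 4 : ℝ) else 0) • avec A (τ l + τ q) = 0 := by
      funext m
      have h0 := htr m
      rw [trace_formula A τ
        (fun l q => if ∃ s, l ∈ Jset s ∧ q ∈ Jset s then (1 / 4 : ℝ) else 0)] at h0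
      simpa [Finset.sum_apply, ite_apply, Pi.zero_apply, Pi.smul_apply,
        smul_eq_mul, mul_ite, mul_zero] using h0
    have hnegmid : ∀ l q : J, (∃ s, l ∈ Jset s ∧ q ∈ Jset s) →
        -avec A ((1 / 2 : ℝ) • (τ l + τ q)) ∈ C := by
      intro l0 q0 h0
      have hprod : ∑ l : J, ∑ q : J,
          (if ∃ s, l ∈ Jset s ∧ q ∈ Jset s then (1 / 4 : ℝ) else 0) • avec A (τ l + τ q) =
          ∑ lq ∈ (Finset.univ ×ˢ Finset.univ : Finset (J × J)),
          (if ∃ s, lq.1 ∈ Jset s ∧ lq.2 ∈ Jset s then (1 / 4 : ℝ) else 0) •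
            avec A (τ lq.1 + τ lq.2) := (Finset.sum_product' _ _ _).symm
      have hmem : ((l0, q0) : J × J) ∈ (Finset.univ ×ˢ Finset.univ : Finset (J × J)) := by
        simp
      have e : ∑ l : J, ∑ q : J,
          (if ∃ s, l ∈ Jset s ∧ q ∈ Jset s then (1 / 4 : ℝ) else 0) • avec A (τ l + τ q) =
          (1 / 4 : ℝ) • avec A (τ l0 + τ q0) +
          ∑ lq ∈ (Finset.univ ×ˢ Finset.univ : Finset (J × J)).erase (l0, q0),
            (if ∃ s, lq.1 ∈ Jset s ∧ lq.2 ∈ Jset s then (1 / 4 : ℝ) else 0) •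
              avec A (τ lq.1 + τ lq.2) := by
        rw [hprod, ← Finset.add_sum_erase _ _ hmem]
        beta_reduce
        rw [if_pos h0]
      have h14 : avec A ((1 / 2 : ℝ) • (τ l0 + τ q0)) = (1 / 4 : ℝ) • avec A (τ l0 + τ q0) := by
        rw [avec_smul]; norm_num
      have key : -avec A ((1 / 2 : ℝ) • (τ l0 + τ q0)) =
          (∑ i, α i • avec A (t i)) +
          ∑ lq ∈ (Finset.univ ×ˢ Finset.univ : Finset (J × J)).erase (l0, q0),
            (if ∃ s, lq.1 ∈ Jset s ∧ lq.2 ∈ Jset s then (1 / 4 : ℝ) else 0) •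
              avec A (τ lq.1 + τ lq.2) := by
        have hrel2 := hrelv
        rw [e] at hrel2
        have h4 : (1 / 4 : ℝ) • avec A (τ l0 + τ q0) +
            ((∑ i, α i • avec A (t i)) +
            ∑ lq ∈ (Finset.univ ×ˢ Finset.univ : Finset (J × J)).erase (l0, q0),
              (if ∃ s, lq.1 ∈ Jset s ∧ lq.2 ∈ Jset s then (1 / 4 : ℝ) else 0) •
                avec A (τ lq.1 + τ lq.2)) = 0 := by
          rw [← hrel2]; abel
        rw [h14]
        exact neg_eq_of_add_eq_zero_right h4
      rw [key]
      exact coneOf_add (coneOf_sum _ _ fun i _ => coneOf_smul (le_of_lt (hα i))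
        (mem_coneOf_s6 ⟨t i, ht i, rfl⟩)) (coneOf_sum _ _ fun lq _ => hG lq.1 lq.2)
    have hneg : ∀ u ∈ Tim A, -avec A u ∈ C := by
      intro u hu
      rw [hTimU] at hu
      obtain ⟨s, hus⟩ := Set.mem_iUnion.mp hu
      rw [mem_convexHull_iff_exists_fintype] at hus
      obtain ⟨ι, hι, w, z, hw0, hw1, hz, hx⟩ := hus
      choose g hg1 hg2 using fun i => hz i
      have hu' : u = ∑ i, w i • τ (g i) := by
        rw [← hx]
        exact Finset.sum_congr rfl fun i _ => by rw [hg2 i]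
      have keyid : -avec A u = (∑ i, w i • avec A (τ (g i))) +
          ∑ i, ∑ i', (2 * (w i * w i')) •
            (-avec A ((1 / 2 : ℝ) • (τ (g i) + τ (g i')))) := by
        funext m
        have hcm : ∀ i i', avec A ((1 / 2 : ℝ) • (τ (g i) + τ (g i'))) m =
            (1 / 4 : ℝ) * ((τ (g i) ⬝ᵥ (A m).mulVec (τ (g i)))
              + (τ (g i) ⬝ᵥ (A m).mulVec (τ (g i')))
              + (τ (g i') ⬝ᵥ (A m).mulVec (τ (g i)))
              + (τ (g i') ⬝ᵥ (A m).mulVec (τ (g i')))) := by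
          intro i i'
          have hsm := congrFun (avec_smul A (1/2 : ℝ) (τ (g i) + τ (g i'))) m
          rw [hsm]
          simp only [avec, Pi.smul_apply, smul_eq_mul, add_dotProduct, dotProduct_add,
            Matrix.mulVec_add]
          ring
        have hum : avec A u m = ∑ i, ∑ i',
            (w i * w i') * (τ (g i) ⬝ᵥ (A m).mulVec (τ (g i'))) := by
          rw [show avec A u m = u ⬝ᵥ (A m).mulVec u from rfl, hu', dot_expand]
        have hcombo := combo w (fun i i' => τ (g i) ⬝ᵥ (A m).mulVec (τ (g i'))) hw1
        simp only [Pi.neg_apply, Pi.add_apply, Finset.sum_apply, Pi.smul_apply, smul_eq_mul]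
        rw [hum, ← hcombo]
        refine congrArg₂ (· + ·) rfl ?_
        refine Finset.sum_congr rfl fun i _ => Finset.sum_congr rfl fun i' _ => ?_
        rw [hcm i i']
        try ring
      rw [keyid]
      refine coneOf_add (coneOf_sum _ _ fun i _ => coneOf_smul (hw0 i)
        (mem_coneOf_s6 ⟨τ (g i), hτTim (g i), rfl⟩))
        (coneOf_sum _ _ fun i _ => coneOf_sum _ _ fun i' _ => ?_)
      exact coneOf_smul (by have h1 := hw0 i; have h2 := hw0 i'; positivity)
        (hnegmid (g i) (g i') ⟨s, hg1 i, hg1 i'⟩)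
    have hnegC : ∀ x ∈ C, -x ∈ C := by
      rintro x ⟨k, c, v, hcn, hvn, rfl⟩
      have hrw : -∑ i, c i • v i = ∑ i, c i • (-v i) := by
        rw [← Finset.sum_neg_distrib]
        exact Finset.sum_congr rfl fun i _ => (smul_neg (c i) (v i)).symm
      rw [hrw]
      refine coneOf_sum _ _ fun i _ => coneOf_smul (hcn i) ?_
      obtain ⟨u, hu, hvu⟩ := hvn i
      rw [← hvu]
      exact hneg u hu
    refine ⟨⟨⟨⟨C, fun {a b} ha hb => coneOf_add ha hb⟩, zero_mem_coneOf⟩,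
      fun r {x} hx => ?_⟩, rfl⟩
    rcases le_or_gt 0 r with h | h
    · exact coneOf_smul h hx
    · have hrx : r • x = (-r) • (-x) := by rw [neg_smul, smul_neg, neg_neg]
      rw [hrx]
      exact coneOf_smul (by linarith) (hnegC x hx)
end MatLemmas
end
end

section
/- Condition B1) holds if and only if for any maximum slack Y* in the system A(x) ∈ COP^p the set {B(z) : z ∈ ℝ^{n+1}} ∩ (tan(Y*, COP^p) \ ldir(Y*, COP^p)) is empty, where for Y ∈ S^p one defines dir(Y, COP^p) := {D ∈ S^p : Y + εD ∈ COP^p for some ε > 0}, ldir(Y, COP^p) := dir(Y, COP^p) ∩ (−dir(Y, COP^p)), and tan(Y, COP^p) := cl(dir(Y, COP^p)) ∩ (−cl(dir(Y, COP^p))). -/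
open Matrix Set Pointwise
open scoped Classical

noncomputable section

/-- `dir(Y, COP^p)`: feasible directions at `Y` in the copositive cone. -/
def dirSet {p : ℕ} (Y : Matrix (Fin p) (Fin p) ℝ) : Set (Matrix (Fin p) (Fin p) ℝ) :=
  {D | ∃ ε > (0 : ℝ), Y + ε • D ∈ COP p}

namespace Aux
open Filter

variable {p : ℕ}

lemma dot_symm (M : Matrix (Fin p) (Fin p) ℝ) (hM : M.IsSymm) (v w : Fin p → ℝ) :
    v ⬝ᵥ M *ᵥ w = w ⬝ᵥ M *ᵥ v := by
  rw [Matrix.dotProduct_mulVec, ← Matrix.vecMul_transpose, hM.eq, dotProduct_comm]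

lemma dot_mulVec_expand (M : Matrix (Fin p) (Fin p) ℝ) (v w : Fin p → ℝ) :
    v ⬝ᵥ M *ᵥ w = ∑ k, v k * (M *ᵥ w) k := rfl

lemma quad_expand (M : Matrix (Fin p) (Fin p) ℝ) (hM : M.IsSymm) (t v : Fin p → ℝ) (s : ℝ) :
    (t + s • v) ⬝ᵥ M *ᵥ (t + s • v)
      = t ⬝ᵥ M *ᵥ t + 2 * s * (v ⬝ᵥ M *ᵥ t) + s ^ 2 * (v ⬝ᵥ M *ᵥ v) := by
  rw [Matrix.mulVec_add, Matrix.mulVec_smul]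
  rw [dotProduct_add, add_dotProduct, add_dotProduct,
    dotProduct_smul, smul_dotProduct, smul_dotProduct,
    dotProduct_smul]
  have h := dot_symm M hM t v
  simp only [smul_eq_mul]
  ring_nf
  rw [h]
  ring

lemma quad_add (M N : Matrix (Fin p) (Fin p) ℝ) (v w : Fin p → ℝ) :
    v ⬝ᵥ (M + N) *ᵥ w = v ⬝ᵥ M *ᵥ w + v ⬝ᵥ N *ᵥ w := by
  rw [Matrix.add_mulVec, dotProduct_add]

lemma quad_smul (c : ℝ) (M : Matrix (Fin p) (Fin p) ℝ) (v w : Fin p → ℝ) :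
    v ⬝ᵥ (c • M) *ᵥ w = c * (v ⬝ᵥ M *ᵥ w) := by
  rw [Matrix.smul_mulVec, dotProduct_smul, smul_eq_mul]

lemma cont_mulVec (M : Matrix (Fin p) (Fin p) ℝ) (k : Fin p) :
    Continuous fun t : Fin p → ℝ => (M *ᵥ t) k := by
  have : (fun t : Fin p → ℝ => (M *ᵥ t) k) = fun t => ∑ j, M k j * t j := rfl
  rw [this]
  exact continuous_finset_sum _ fun j _ => (continuous_const.mul (continuous_apply j))

lemma cont_quad (M : Matrix (Fin p) (Fin p) ℝ) :
    Continuous fun t : Fin p → ℝ => t ⬝ᵥ M *ᵥ t := by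
  have : (fun t : Fin p → ℝ => t ⬝ᵥ M *ᵥ t) = fun t => ∑ k, t k * (M *ᵥ t) k := rfl
  rw [this]
  exact continuous_finset_sum _ fun k _ => ((continuous_apply k).mul (cont_mulVec M k))

lemma copos_iff_simplex (M : Matrix (Fin p) (Fin p) ℝ) :
    M ∈ COP p ↔ ∀ t ∈ simplexT p, 0 ≤ t ⬝ᵥ M *ᵥ t := by
  constructor
  · exact fun h t ht => h t ht.1
  · intro h t ht
    rcases eq_or_ne (∑ k, t k) 0 with hs | hs
    · have hz : t = 0 := by
        funext k
        have h1 : t k ≤ ∑ j, t j := Finset.single_le_sum (fun j _ => ht j) (Finset.mem_univ k)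
        have := ht k
        have : t k = 0 := by rw [hs] at h1; linarith
        simpa using this
      simp [hz]
    · have hspos : 0 < ∑ k, t k :=
        lt_of_le_of_ne (Finset.sum_nonneg fun j _ => ht j) (Ne.symm hs)
      set c := (∑ k, t k)⁻¹ with hc
      have hcpos : 0 < c := inv_pos.2 hspos
      have hmem : c • t ∈ simplexT p := by
        constructor
        · intro k; exact mul_nonneg hcpos.le (ht k)
        · simp only [Pi.smul_apply, smul_eq_mul, ← Finset.mul_sum, hc]
          field_simp
      have := h (c • t) hmem
      have hexp : (c • t) ⬝ᵥ M *ᵥ (c • t) = c ^ 2 * (t ⬝ᵥ M *ᵥ t) := by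
        rw [Matrix.mulVec_smul, dotProduct_smul, smul_dotProduct]
        simp [smul_eq_mul]; ring
      rw [hexp] at this
      nlinarith [this, hcpos, sq_nonneg c, mul_pos hcpos hcpos]

/-- helper: if `0 ≤ 2*s*a + s^2*b` for all small positive `s`, then `0 ≤ a`. -/
lemma lin_nonneg_of_quad (a b s₀ : ℝ) (hs₀ : 0 < s₀)
    (h : ∀ s : ℝ, 0 < s → s ≤ s₀ → 0 ≤ 2 * s * a + s ^ 2 * b) : 0 ≤ a := by
  by_contra hneg
  push_neg at hneg
  have hbpos : (0:ℝ) < |b| + 1 := by positivity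
  have hna : 0 < -a := by linarith
  set s := min s₀ ((-a) / (|b| + 1)) with hs
  have hspos : 0 < s := lt_min hs₀ (div_pos hna hbpos)
  have h1 : s * |b| ≤ -a := by
    have h2 : s ≤ (-a) / (|b| + 1) := min_le_right _ _
    calc s * |b| ≤ ((-a) / (|b| + 1)) * (|b| + 1) := by
          apply mul_le_mul h2 (by linarith) (abs_nonneg b) (by positivity)
      _ = -a := by field_simp
  have h3 : s ^ 2 * b ≤ s * (-a) := by
    calc s ^ 2 * b ≤ s ^ 2 * |b| := by
          apply mul_le_mul_of_nonneg_left (le_abs_self b) (sq_nonneg s)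
      _ = s * (s * |b|) := by ring
      _ ≤ s * (-a) := mul_le_mul_of_nonneg_left h1 hspos.le
  have h4 := h s hspos (min_le_left _ _)
  nlinarith

lemma lin_zero_of_quad (a b s₀ : ℝ) (hs₀ : 0 < s₀)
    (h : ∀ s : ℝ, |s| ≤ s₀ → 0 ≤ 2 * s * a + s ^ 2 * b) : a = 0 := by
  have h1 : 0 ≤ a := lin_nonneg_of_quad a b s₀ hs₀ fun s hs hs' =>
    h s (by rw [abs_of_pos hs]; exact hs')
  have h2 : 0 ≤ -a := by
    apply lin_nonneg_of_quad (-a) b s₀ hs₀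
    intro s hs hs'
    have := h (-s) (by rw [abs_neg, abs_of_pos hs]; exact hs')
    nlinarith
  linarith

/-- first-order condition at a zero of a copositive form -/
lemma copos_first_order (M : Matrix (Fin p) (Fin p) ℝ) (hM : M.IsSymm) (hcop : M ∈ COP p)
    (t : Fin p → ℝ) (ht : ∀ k, 0 ≤ t k) (h0 : t ⬝ᵥ M *ᵥ t = 0) (k : Fin p) :
    0 ≤ (M *ᵥ t) k := by
  have key : ∀ s : ℝ, 0 < s → s ≤ 1 →
      0 ≤ 2 * s * ((Pi.single k 1 : Fin p → ℝ) ⬝ᵥ M *ᵥ t)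
        + s ^ 2 * ((Pi.single k 1 : Fin p → ℝ) ⬝ᵥ M *ᵥ (Pi.single k 1 : Fin p → ℝ)) := by
    intro s hs _
    have hfeas : ∀ j, 0 ≤ (t + s • (Pi.single k 1 : Fin p → ℝ)) j := by
      intro j
      rcases eq_or_ne j k with rfl | hj
      · simp only [Pi.add_apply, Pi.smul_apply, Pi.single_eq_same, smul_eq_mul, mul_one]
        have := ht j; linarith
      · simp [Pi.single_apply, hj]; exact ht j
    have := hcop _ hfeas
    rw [quad_expand M hM t _ s, h0] at this
    linarith
  have := lin_nonneg_of_quad _ _ 1 one_pos key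
  rwa [single_dotProduct, one_mul] at this


open Filter in
/-- the face of the simplex supported on `K` -/
def faceSet (p : ℕ) (K : Finset (Fin p)) : Set (Fin p → ℝ) :=
  {t | t ∈ simplexT p ∧ ∀ k ∉ K, t k = 0}

lemma isCompact_faceSet (K : Finset (Fin p)) : IsCompact (faceSet p K) := by
  have h1 : faceSet p K = stdSimplex ℝ (Fin p) ∩ ⋂ (k : Fin p), ⋂ (_ : k ∉ K), {t | t k = 0} := by
    ext t
    simp only [faceSet, simplexT, stdSimplex, Set.mem_inter_iff, Set.mem_setOf_eq,
      Set.mem_iInter]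
  rw [h1]
  exact (isCompact_stdSimplex _ _).inter_right
    (isClosed_iInter fun k => isClosed_iInter fun _ =>
      isClosed_eq (continuous_apply k) continuous_const)

/-- positivity of the perturbed form on a face -/
def goodOn (Q B : Matrix (Fin p) (Fin p) ℝ) (K : Finset (Fin p)) (ε : ℝ) : Prop :=
  ∀ t ∈ faceSet p K, 0 ≤ t ⬝ᵥ (Q + ε • B) *ᵥ t

lemma quad_add_smul (Q B : Matrix (Fin p) (Fin p) ℝ) (ε : ℝ) (v w : Fin p → ℝ) :
    v ⬝ᵥ (Q + ε • B) *ᵥ w = v ⬝ᵥ Q *ᵥ w + ε * (v ⬝ᵥ B *ᵥ w) := by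
  rw [Matrix.add_mulVec, dotProduct_add, Matrix.smul_mulVec,
    dotProduct_smul, smul_eq_mul]

lemma mulVec_add_smul (Q B : Matrix (Fin p) (Fin p) ℝ) (ε : ℝ) (w : Fin p → ℝ) (k : Fin p) :
    ((Q + ε • B) *ᵥ w) k = (Q *ᵥ w) k + ε * (B *ᵥ w) k := by
  rw [Matrix.add_mulVec, Matrix.smul_mulVec]
  simp

lemma goodOn_mono {Q B : Matrix (Fin p) (Fin p) ℝ} {K : Finset (Fin p)} {ε ε' : ℝ}
    (hQ : Q ∈ COP p) (hε' : 0 < ε') (hle : ε' ≤ ε) (hg : goodOn Q B K ε) :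
    goodOn Q B K ε' := by
  intro t ht
  have hq : 0 ≤ t ⬝ᵥ Q *ᵥ t := hQ t ht.1.1
  have hg' := hg t ht
  rw [quad_add_smul] at hg' ⊢
  have hεpos : 0 < ε := lt_of_lt_of_le hε' hle
  nlinarith [mul_nonneg (sub_nonneg.2 hle) hq]

lemma sum_weight (t w : Fin p → ℝ) (K : Finset (Fin p)) (c : ℝ) (ht0 : ∀ k ∉ K, t k = 0)
    (hw : ∀ k ∈ K, w k = c) (hsum : ∑ k, t k = 1) : t ⬝ᵥ w = c := by
  have h1 : ∀ k, t k * w k = t k * c := by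
    intro k
    by_cases hk : k ∈ K
    · rw [hw k hk]
    · rw [ht0 k hk]; ring
  calc t ⬝ᵥ w = ∑ k, t k * w k := rfl
    _ = ∑ k, t k * c := Finset.sum_congr rfl fun k _ => h1 k
    _ = (∑ k, t k) * c := by rw [← Finset.sum_mul]
    _ = c := by rw [hsum, one_mul]

/-- The key perturbation lemma: if at every zero of the copositive `Q` on the simplex the
corresponding row values of `B` are dominated by those of `Q`, then `Q + εB` is copositive
for small `ε > 0`. -/
theorem hard_lemma (Q B : Matrix (Fin p) (Fin p) ℝ) (hQs : Q.IsSymm) (hBs : B.IsSymm)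
    (hQ : Q ∈ COP p) (C : ℝ)
    (h2 : ∀ t ∈ simplexT p, t ⬝ᵥ Q *ᵥ t = 0 → ∀ k, |(B *ᵥ t) k| ≤ C * (Q *ᵥ t) k) :
    ∃ ε : ℝ, 0 < ε ∧ (Q + ε • B) ∈ COP p := by
  have key : ∀ N : ℕ, ∀ K : Finset (Fin p), K.card ≤ N → ∃ ε > 0, goodOn Q B K ε := by
    intro N
    induction N with
    | zero =>
      intro K hK
      have hKe : K = ∅ := Finset.card_eq_zero.1 (le_antisymm hK (Nat.zero_le _))
      refine ⟨1, one_pos, fun t ht => ?_⟩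
      exfalso
      have hz : ∀ k, t k = 0 := fun k => ht.2 k (by simp [hKe])
      have hs := ht.1.2
      rw [Finset.sum_congr rfl fun k _ => hz k] at hs
      simp at hs
    | succ N IH =>
      intro K hK
      rcases le_or_gt K.card N with hle | hlt
      · exact IH K hle
      have hKne : K.Nonempty := Finset.card_pos.1 (by omega)
      obtain ⟨k₀, hk₀⟩ := hKne
      by_contra hbad
      push_neg at hbad
      -- hbad : ∀ ε > 0, ¬ goodOn ... ; unfold
      have hbad' : ∀ ε : ℝ, 0 < ε → ∃ t ∈ faceSet p K, t ⬝ᵥ (Q + ε • B) *ᵥ t < 0 := by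
        intro ε hε
        have := hbad ε hε
        unfold goodOn at this
        push_neg at this
        obtain ⟨t, ht, hlt⟩ := this
        exact ⟨t, ht, hlt⟩
      -- uniform ε for all one-smaller faces
      have hsub : ∀ k : Fin p, ∃ ε > 0, k ∈ K → goodOn Q B (K.erase k) ε := by
        intro k
        by_cases hk : k ∈ K
        · obtain ⟨ε, hεpos, hg⟩ := IH (K.erase k) (by rw [Finset.card_erase_of_mem hk]; omega)
          exact ⟨ε, hεpos, fun _ => hg⟩
        · exact ⟨1, one_pos, fun h => absurd h hk⟩
      choose εf hεfpos hεfgood using hsub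
      have : Nonempty (Fin p) := ⟨k₀⟩
      set ε₀ : ℝ := Finset.univ.inf' Finset.univ_nonempty εf with hε₀
      have hε₀pos : 0 < ε₀ := (Finset.lt_inf'_iff _).2 fun k _ => hεfpos k
      have hε₀le : ∀ k, ε₀ ≤ εf k := fun k => Finset.inf'_le _ (Finset.mem_univ k)
      -- sequence of epsilons
      set e : ℕ → ℝ := fun m => min ε₀ (1 / (m + 1)) with he
      have hepos : ∀ m, 0 < e m := fun m => lt_min hε₀pos (by positivity)
      have hele : ∀ m, e m ≤ ε₀ := fun m => min_le_left _ _
      have heto : Tendsto e atTop (nhds 0) := by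
        apply tendsto_of_tendsto_of_tendsto_of_le_of_le (g := fun _ : ℕ => (0:ℝ))
          (h := fun m : ℕ => 1 / ((m:ℝ) + 1)) tendsto_const_nhds
          tendsto_one_div_add_atTop_nhds_zero_nat
          (fun m => (hepos m).le) (fun m => min_le_right _ _)
      -- minimizers
      have hmin : ∀ m : ℕ, ∃ t, t ∈ faceSet p K ∧ t ⬝ᵥ (Q + e m • B) *ᵥ t < 0 ∧
          ∀ u ∈ faceSet p K, t ⬝ᵥ (Q + e m • B) *ᵥ t ≤ u ⬝ᵥ (Q + e m • B) *ᵥ u := by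
        intro m
        obtain ⟨tb, htb, hval⟩ := hbad' (e m) (hepos m)
        obtain ⟨t, ht, hmin⟩ := (isCompact_faceSet K).exists_isMinOn ⟨tb, htb⟩
          ((cont_quad (Q + e m • B)).continuousOn)
        exact ⟨t, ht, lt_of_le_of_lt (hmin htb) hval, fun u hu => hmin hu⟩
      choose t htA htneg htmin using hmin
      -- full support on K
      have hfull : ∀ m, ∀ k ∈ K, 0 < t m k := by
        intro m k hk
        rcases ((htA m).1.1 k).lt_or_eq with h | h
        · exact h
        · exfalso
          have hsupp : ∀ j, j ∉ K.erase k → t m j = 0 := by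
            intro j hj
            rcases eq_or_ne j k with rfl | hne
            · exact h.symm
            · exact (htA m).2 j fun hjK => hj (Finset.mem_erase.2 ⟨hne, hjK⟩)
          have hg := goodOn_mono hQ (hepos m) (le_trans (hele m) (hε₀le k)) (hεfgood k hk)
          exact absurd (hg (t m) ⟨(htA m).1, hsupp⟩) (not_le.2 (htneg m))
      -- KKT stationarity
      have hMs : ∀ m : ℕ, (Q + e m • B).IsSymm := fun m => hQs.add (hBs.smul _)
      have hKKT : ∀ m, ∀ k ∈ K, ∀ l ∈ K,
          ((Q + e m • B) *ᵥ t m) k = ((Q + e m • B) *ᵥ t m) l := by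
        intro m k hk l hl
        rcases eq_or_ne k l with rfl | hne
        · rfl
        set v : Fin p → ℝ := Pi.single k 1 - Pi.single l 1 with hv
        have hdot : v ⬝ᵥ (Q + e m • B) *ᵥ t m
            = ((Q + e m • B) *ᵥ t m) k - ((Q + e m • B) *ᵥ t m) l := by
          rw [hv, sub_dotProduct, single_dotProduct, single_dotProduct]
          ring
        set s₀ : ℝ := min (t m k) (t m l) with hs₀
        have hs₀pos : 0 < s₀ := lt_min (hfull m k hk) (hfull m l hl)
        have hquad : ∀ s : ℝ, |s| ≤ s₀ → 0 ≤ 2 * s * (v ⬝ᵥ (Q + e m • B) *ᵥ t m)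
            + s ^ 2 * (v ⬝ᵥ (Q + e m • B) *ᵥ v) := by
          intro s hs
          have habs := abs_le.1 hs
          have hvk : v k = 1 := by simp [hv, Pi.single_apply, hne]
          have hvl : v l = -1 := by simp [hv, Pi.single_apply, Ne.symm hne]
          have hfeas : t m + s • v ∈ faceSet p K := by
            refine ⟨⟨?_, ?_⟩, ?_⟩
            · intro j
              rcases eq_or_ne j k with rfl | hjk
              · have hval : (t m + s • v) j = t m j + s := by
                  simp [hvk]
                rw [hval]
                have h1 : s₀ ≤ t m j := min_le_left _ _
                linarith [habs.1]
              rcases eq_or_ne j l with rfl | hjl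
              · have hval : (t m + s • v) j = t m j - s := by
                  simp [hvl]; ring
                rw [hval]
                have h1 : s₀ ≤ t m j := min_le_right _ _
                linarith [habs.2]
              · have hval : (t m + s • v) j = t m j := by
                  simp [hv, Pi.single_apply, hjk, hjl]
                rw [hval]
                exact (htA m).1.1 j
            · have hvsum : ∑ j, v j = 0 := by
                rw [hv]
                simp [Finset.sum_sub_distrib, Finset.sum_pi_single]
              have : ∑ j, (t m + s • v) j = (∑ j, t m j) + s * ∑ j, v j := by
                simp [Finset.sum_add_distrib, Finset.mul_sum]
              rw [this, hvsum, (htA m).1.2]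
              ring
            · intro j hj
              have hjk : j ≠ k := fun h => hj (h ▸ hk)
              have hjl : j ≠ l := fun h => hj (h ▸ hl)
              simp [hv, Pi.single_apply, hjk, hjl, (htA m).2 j hj]
          have hmin' := htmin m _ hfeas
          rw [quad_expand _ (hMs m) (t m) v s] at hmin'
          linarith
        have hzero := lin_zero_of_quad _ _ s₀ hs₀pos hquad
        rw [hdot] at hzero
        linarith
      -- the common multiplier equals the (negative) minimum value
      set μ : ℕ → ℝ := fun m => ((Q + e m • B) *ᵥ t m) k₀ with hμ
      have hμval : ∀ m, t m ⬝ᵥ (Q + e m • B) *ᵥ t m = μ m := fun m =>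
        sum_weight _ _ K _ (htA m).2 (fun k hk => hKKT m k hk k₀ hk₀) (htA m).1.2
      have hμneg : ∀ m, μ m < 0 := fun m => (hμval m) ▸ htneg m
      -- a convergent subsequence of the minimizers
      obtain ⟨tbar, htbar, φ, hφ, hconv⟩ := (isCompact_faceSet K).tendsto_subseq htA
      have heφ : Tendsto (fun m => e (φ m)) atTop (nhds 0) := heto.comp hφ.tendsto_atTop
      have hwlim : ∀ k : Fin p, Tendsto (fun m => ((Q + e (φ m) • B) *ᵥ t (φ m)) k) atTop
          (nhds ((Q *ᵥ tbar) k)) := by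
        intro k
        have h1 : Tendsto (fun m => (Q *ᵥ t (φ m)) k) atTop (nhds ((Q *ᵥ tbar) k)) :=
          ((cont_mulVec Q k).tendsto tbar).comp hconv
        have h2 : Tendsto (fun m => (B *ᵥ t (φ m)) k) atTop (nhds ((B *ᵥ tbar) k)) :=
          ((cont_mulVec B k).tendsto tbar).comp hconv
        have h3 := heφ.mul h2
        rw [zero_mul] at h3
        have h4 := h1.add h3
        rw [add_zero] at h4
        exact Filter.Tendsto.congr (fun m => (mulVec_add_smul Q B _ _ k).symm) h4
      have hQbar : ∀ k ∈ K, (Q *ᵥ tbar) k = (Q *ᵥ tbar) k₀ := by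
        intro k hk
        exact tendsto_nhds_unique
          (Filter.Tendsto.congr (fun m => hKKT (φ m) k hk k₀ hk₀) (hwlim k)) (hwlim k₀)
      have hμbar_le : (Q *ᵥ tbar) k₀ ≤ 0 := by
        apply le_of_tendsto (hwlim k₀)
        filter_upwards with m
        exact (hμneg (φ m)).le
      have hqbar : tbar ⬝ᵥ Q *ᵥ tbar = (Q *ᵥ tbar) k₀ :=
        sum_weight _ _ K _ htbar.2 hQbar htbar.1.2
      have hqbar0 : tbar ⬝ᵥ Q *ᵥ tbar = 0 :=
        le_antisymm (hqbar ▸ hμbar_le) (hQ tbar htbar.1.1)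
      have hQrow0 : ∀ k ∈ K, (Q *ᵥ tbar) k = 0 := by
        intro k hk
        have h1 := copos_first_order Q hQs hQ tbar htbar.1.1 hqbar0 k₀
        have h2 : (Q *ᵥ tbar) k₀ = 0 := le_antisymm hμbar_le h1
        rw [hQbar k hk, h2]
      have hBrow0 : ∀ k ∈ K, (B *ᵥ tbar) k = 0 := by
        intro k hk
        have h3 := h2 tbar htbar.1 hqbar0 k
        rw [hQrow0 k hk, mul_zero] at h3
        exact abs_eq_zero.1 (le_antisymm h3 (abs_nonneg _))
      -- the contradiction, at any index of the subsequence
      set m₁ := φ 0 with hm₁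
      have hx : tbar ⬝ᵥ ((Q + e m₁ • B) *ᵥ t m₁) = μ m₁ :=
        sum_weight _ _ K _ htbar.2 (fun k hk => hKKT m₁ k hk k₀ hk₀) htbar.1.2
      have hy : tbar ⬝ᵥ ((Q + e m₁ • B) *ᵥ t m₁) = 0 := by
        rw [dot_symm _ (hMs m₁)]
        apply sum_weight _ _ K _ (htA m₁).2 _ (htA m₁).1.2
        intro k hk
        rw [mulVec_add_smul, hQrow0 k hk, hBrow0 k hk]
        ring
      have hcontr := hμneg m₁
      rw [← hx, hy] at hcontr
      exact lt_irrefl _ hcontr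
  obtain ⟨ε, hεpos, hgood⟩ := key p Finset.univ (by simp)
  refine ⟨ε, hεpos, (copos_iff_simplex _).2 fun u hu => hgood u ⟨hu, fun k hk => absurd (Finset.mem_univ k) hk⟩⟩


/-! ### new material -/

lemma ri_extend {V : Type*} [AddCommGroup V] [Module ℝ V] [TopologicalSpace V]
    [IsTopologicalAddGroup V] [ContinuousSMul ℝ V] {s : Set V} {Y W : V}
    (hY : Y ∈ intrinsicInterior ℝ s) (hW : W ∈ s) : ∃ δ : ℝ, 0 < δ ∧ Y + δ • (Y - W) ∈ s := by
  obtain ⟨y, hy, hyY⟩ := hY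
  have hYspan : Y ∈ affineSpan ℝ s := hyY ▸ y.2
  have hWspan : W ∈ affineSpan ℝ s := subset_affineSpan ℝ s hW
  have hmem : ∀ δ : ℝ, Y + δ • (Y - W) ∈ affineSpan ℝ s := by
    intro δ
    have h := AffineSubspace.smul_vsub_vadd_mem (affineSpan ℝ s) δ hYspan hWspan hYspan
    simpa [vsub_eq_sub, vadd_eq_add, add_comm] using h
  set g : ℝ → affineSpan ℝ s := fun δ => ⟨Y + δ • (Y - W), hmem δ⟩ with hg
  have hgcont : Continuous g := by
    apply Continuous.subtype_mk
    exact continuous_const.add (continuous_id.smul continuous_const)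
  have hg0 : g 0 = y := by
    apply Subtype.ext
    simp [hg, hyY]
  have hnb : g ⁻¹' (interior ((↑) ⁻¹' s : Set (affineSpan ℝ s))) ∈ nhds (0 : ℝ) := by
    apply hgcont.continuousAt.preimage_mem_nhds
    rw [hg0]
    exact isOpen_interior.mem_nhds hy
  obtain ⟨ε, hεpos, hball⟩ := Metric.mem_nhds_iff.1 hnb
  refine ⟨ε / 2, by positivity, ?_⟩
  have hb : (ε / 2 : ℝ) ∈ Metric.ball (0 : ℝ) ε := by
    rw [Metric.mem_ball, Real.dist_eq, sub_zero, abs_of_pos (by positivity : (0:ℝ) < ε/2)]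
    linarith
  have h2 : g (ε / 2) ∈ interior ((↑) ⁻¹' s : Set (affineSpan ℝ s)) := hball hb
  have h3 : g (ε / 2) ∈ (Subtype.val ⁻¹' s : Set (affineSpan ℝ s)) := interior_subset h2
  exact Set.mem_preimage.1 h3

lemma isSymm_sum {ι : Type*} (s : Finset ι) (f : ι → Matrix (Fin p) (Fin p) ℝ)
    (h : ∀ i ∈ s, (f i).IsSymm) : (∑ i ∈ s, f i).IsSymm := by
  unfold Matrix.IsSymm
  rw [Matrix.transpose_sum]
  exact Finset.sum_congr rfl fun i hi => h i hi

lemma slack_isSymm {n : ℕ} (A : Fin (n + 1) → Matrix (Fin p) (Fin p) ℝ)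
    (hA : ∀ m, (A m).IsSymm) (x : Fin n → ℝ) : (slack A x).IsSymm :=
  (hA 0).add (isSymm_sum _ _ fun m _ => (hA m.succ).smul _)

lemma Bmat_isSymm {n : ℕ} (A : Fin (n + 1) → Matrix (Fin p) (Fin p) ℝ)
    (hA : ∀ m, (A m).IsSymm) (z : Fin (n + 1) → ℝ) : (Bmat A z).IsSymm :=
  isSymm_sum _ _ fun m _ => (hA m).smul _

lemma Bmat_neg {n : ℕ} (A : Fin (n + 1) → Matrix (Fin p) (Fin p) ℝ) (z : Fin (n + 1) → ℝ) :
    Bmat A (-z) = -Bmat A z := by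
  simp [Bmat, neg_smul]

lemma quad_neg (B : Matrix (Fin p) (Fin p) ℝ) (v w : Fin p → ℝ) :
    v ⬝ᵥ (-B) *ᵥ w = -(v ⬝ᵥ B *ᵥ w) := by
  rw [Matrix.neg_mulVec, dotProduct_neg]

lemma mulVec_sumv {ι : Type*} [Fintype ι] (M : Matrix (Fin p) (Fin p) ℝ) (f : ι → Fin p → ℝ) :
    M *ᵥ (∑ i, f i) = ∑ i, M *ᵥ f i := by
  ext k
  simp only [Matrix.mulVec, dotProduct, Finset.sum_apply, Finset.mul_sum]
  exact Finset.sum_comm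

lemma sum_dotProduct' {ι : Type*} [Fintype ι] (f : ι → Fin p → ℝ) (w : Fin p → ℝ) :
    (∑ i, f i) ⬝ᵥ w = ∑ i, f i ⬝ᵥ w := by
  simp only [dotProduct, Finset.sum_apply, Finset.sum_mul]
  exact Finset.sum_comm

lemma mulVec_rep {ι : Type*} [Fintype ι] (M : Matrix (Fin p) (Fin p) ℝ) (w : ι → ℝ)
    (u : ι → Fin p → ℝ) (k : Fin p) :
    (M *ᵥ (∑ i, w i • u i)) k = ∑ i, w i * (M *ᵥ u i) k := by
  rw [mulVec_sumv]
  rw [Finset.sum_apply]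
  exact Finset.sum_congr rfl fun i _ => by rw [Matrix.mulVec_smul]; simp

lemma dot_rep {ι : Type*} [Fintype ι] (w : ι → ℝ) (u : ι → Fin p → ℝ) (x : Fin p → ℝ) :
    (∑ i, w i • u i) ⬝ᵥ x = ∑ i, w i * (u i ⬝ᵥ x) := by
  rw [sum_dotProduct']
  exact Finset.sum_congr rfl fun i _ => by rw [smul_dotProduct]; simp

lemma dotProduct_sumr {ι : Type*} [Fintype ι] (x : Fin p → ℝ) (f : ι → Fin p → ℝ) :
    x ⬝ᵥ (∑ i, f i) = ∑ i, x ⬝ᵥ f i := by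
  simp only [dotProduct, Finset.sum_apply, Finset.mul_sum]
  exact Finset.sum_comm

lemma dot_rep_right {ι : Type*} [Fintype ι] (M : Matrix (Fin p) (Fin p) ℝ) (w : ι → ℝ)
    (u : ι → Fin p → ℝ) (x : Fin p → ℝ) :
    x ⬝ᵥ M *ᵥ (∑ i, w i • u i) = ∑ i, w i * (x ⬝ᵥ M *ᵥ u i) := by
  have h1 : M *ᵥ (∑ i, w i • u i) = ∑ i, w i • (M *ᵥ u i) := by
    rw [mulVec_sumv]
    exact Finset.sum_congr rfl fun i _ => Matrix.mulVec_smul M (w i) (u i)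
  rw [h1, dotProduct_sumr]
  exact Finset.sum_congr rfl fun i _ => by rw [dotProduct_smul]; simp

lemma quad_rep {ι : Type*} [Fintype ι] (M : Matrix (Fin p) (Fin p) ℝ) (w : ι → ℝ)
    (u : ι → Fin p → ℝ) :
    (∑ i, w i • u i) ⬝ᵥ M *ᵥ (∑ i, w i • u i)
      = ∑ i, ∑ i', (w i * w i') * (u i ⬝ᵥ M *ᵥ u i') := by
  rw [dot_rep]
  refine Finset.sum_congr rfl fun i _ => ?_
  rw [dot_rep_right, Finset.mul_sum]
  exact Finset.sum_congr rfl fun i' _ => by ring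

lemma quad_smul_vec (M : Matrix (Fin p) (Fin p) ℝ) (c : ℝ) (x : Fin p → ℝ) :
    (c • x) ⬝ᵥ M *ᵥ (c • x) = c ^ 2 * (x ⬝ᵥ M *ᵥ x) := by
  rw [Matrix.mulVec_smul, dotProduct_smul, smul_dotProduct]
  simp only [smul_eq_mul]
  ring

lemma cont_quadM (t : Fin p → ℝ) :
    Continuous fun M : Matrix (Fin p) (Fin p) ℝ => t ⬝ᵥ M *ᵥ t :=
  continuous_const.dotProduct (continuous_id.matrix_mulVec continuous_const)

lemma closure_dir_nonneg {Y : Matrix (Fin p) (Fin p) ℝ} {D : Matrix (Fin p) (Fin p) ℝ}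
    (hD : D ∈ closure (dirSet Y)) (t : Fin p → ℝ) (ht : ∀ k, 0 ≤ t k)
    (h0 : t ⬝ᵥ Y *ᵥ t = 0) : 0 ≤ t ⬝ᵥ D *ᵥ t := by
  have hsub : dirSet Y ⊆ {M : Matrix (Fin p) (Fin p) ℝ | 0 ≤ t ⬝ᵥ M *ᵥ t} := by
    rintro M ⟨ε, hε, hcop⟩
    have := hcop t ht
    rw [quad_add_smul, h0, zero_add] at this
    exact nonneg_of_mul_nonneg_right this hε
  have hclosed : IsClosed {M : Matrix (Fin p) (Fin p) ℝ | 0 ≤ t ⬝ᵥ M *ᵥ t} :=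
    isClosed_le continuous_const (cont_quadM t)
  exact closure_minimal hsub hclosed hD


section MainFacts

variable {n : ℕ} {J S : Type} [Fintype J] [Fintype S]
variable {A : Fin (n + 1) → Matrix (Fin p) (Fin p) ℝ}
variable {τ : J → Fin p → ℝ} {Jset : S → Set J}

lemma maxSlack_mem {Y : Matrix (Fin p) (Fin p) ℝ} (hm : maxSlack A Y) :
    ∃ x ∈ feasX A, Y = slack A x := by
  have h : Y ∈ {D : Matrix (Fin p) (Fin p) ℝ | ∃ x ∈ feasX A, D = slack A x} :=
    intrinsicInterior_subset hm
  exact h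

lemma maxSlack_symm (hA : ∀ m, (A m).IsSymm) {Y : Matrix (Fin p) (Fin p) ℝ}
    (hm : maxSlack A Y) : Y.IsSymm := by
  obtain ⟨x, _, rfl⟩ := maxSlack_mem hm
  exact slack_isSymm A hA x

lemma maxSlack_cop {Y : Matrix (Fin p) (Fin p) ℝ} (hm : maxSlack A Y) : Y ∈ COP p := by
  obtain ⟨x, hx, rfl⟩ := maxSlack_mem hm
  exact hx

lemma TimY {Y : Matrix (Fin p) (Fin p) ℝ} (hm : maxSlack A Y) :
    ∀ v ∈ Tim A, v ⬝ᵥ Y *ᵥ v = 0 := by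
  obtain ⟨x, hx, rfl⟩ := maxSlack_mem hm
  exact fun v hv => hv.2 x hx

lemma MsetY {Y : Matrix (Fin p) (Fin p) ℝ} (hm : maxSlack A Y) (j : J) (k : Fin p)
    (hk : k ∈ Mset A τ j) : (Y *ᵥ τ j) k = 0 := by
  obtain ⟨x, hx, rfl⟩ := maxSlack_mem hm
  exact hk x hx

lemma H2 (hA : ∀ m, (A m).IsSymm) {Y : Matrix (Fin p) (Fin p) ℝ} (hm : maxSlack A Y) :
    ∀ t ∈ simplexT p, t ⬝ᵥ Y *ᵥ t = 0 → t ∈ Tim A := by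
  intro t ht h0
  refine ⟨ht, fun x hx => ?_⟩
  obtain ⟨δ, hδ, hmem⟩ := ri_extend hm
    (show slack A x ∈ {D | ∃ x ∈ feasX A, D = slack A x} from ⟨x, hx, rfl⟩)
  obtain ⟨x', hx', heq⟩ := hmem
  have hcop : Y + δ • (Y - slack A x) ∈ COP p := heq ▸ hx'
  have h1 := hcop t ht.1
  have hsub : t ⬝ᵥ (Y - slack A x) *ᵥ t = t ⬝ᵥ Y *ᵥ t - t ⬝ᵥ slack A x *ᵥ t := by
    rw [Matrix.sub_mulVec, dotProduct_sub]
  rw [quad_add_smul, hsub, h0] at h1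
  have h2 : 0 ≤ t ⬝ᵥ slack A x *ᵥ t := hx t ht.1
  nlinarith

lemma H3 (hA : ∀ m, (A m).IsSymm) {Y : Matrix (Fin p) (Fin p) ℝ} (hm : maxSlack A Y)
    (j : J) (hjTim : τ j ∈ Tim A) (k : Fin p) (hk : k ∉ Mset A τ j) :
    0 < (Y *ᵥ τ j) k := by
  simp only [Mset, Set.mem_setOf_eq] at hk
  push_neg at hk
  obtain ⟨x, hx, hne⟩ := hk
  have hnn : 0 ≤ (slack A x *ᵥ τ j) k :=
    copos_first_order _ (slack_isSymm A hA x) hx _ hjTim.1.1 (hjTim.2 x hx) k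
  have hpos : 0 < (slack A x *ᵥ τ j) k := lt_of_le_of_ne hnn (Ne.symm hne)
  obtain ⟨δ, hδ, hmem⟩ := ri_extend hm
    (show slack A x ∈ {D | ∃ x ∈ feasX A, D = slack A x} from ⟨x, hx, rfl⟩)
  obtain ⟨x', hx', heq⟩ := hmem
  have hcop : Y + δ • (Y - slack A x) ∈ COP p := heq ▸ hx'
  have hsymm : (Y + δ • (Y - slack A x)).IsSymm :=
    (maxSlack_symm hA hm).add (((maxSlack_symm hA hm).sub (slack_isSymm A hA x)).smul δ)
  have hzero : τ j ⬝ᵥ (Y + δ • (Y - slack A x)) *ᵥ τ j = 0 := by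
    have hsub : τ j ⬝ᵥ (Y - slack A x) *ᵥ τ j
        = τ j ⬝ᵥ Y *ᵥ τ j - τ j ⬝ᵥ slack A x *ᵥ τ j := by
      rw [Matrix.sub_mulVec, dotProduct_sub]
    rw [quad_add_smul, hsub, TimY hm _ hjTim, hjTim.2 x hx]
    ring
  have hfo := copos_first_order _ hsymm hcop (τ j) hjTim.1.1 hzero k
  rw [mulVec_add_smul] at hfo
  have hsubk : ((Y - slack A x) *ᵥ τ j) k = (Y *ᵥ τ j) k - (slack A x *ᵥ τ j) k := by
    rw [Matrix.sub_mulVec]; simp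
  rw [hsubk] at hfo
  nlinarith

lemma tim_rep (hTimU : Tim A = ⋃ s, convexHull ℝ (τ '' Jset s)) (v : Fin p → ℝ) (hv : v ∈ Tim A) :
    ∃ (s : S) (ι : Type) (_ : Fintype ι) (w : ι → ℝ) (jj : ι → J),
      (∀ i, 0 ≤ w i) ∧ (∑ i, w i = 1) ∧ (∀ i, jj i ∈ Jset s) ∧ v = ∑ i, w i • τ (jj i) := by
  rw [hTimU] at hv
  obtain ⟨s, hvs⟩ := Set.mem_iUnion.1 hv
  rw [mem_convexHull_iff_exists_fintype] at hvs
  obtain ⟨ι, hι, w, zf, hw0, hw1, hz, hsum⟩ := hvs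
  have hch : ∀ i, ∃ j, j ∈ Jset s ∧ τ j = zf i := by
    intro i
    obtain ⟨j, hj, hje⟩ := hz i
    exact ⟨j, hj, hje⟩
  choose jj hjj1 hjj2 using hch
  refine ⟨s, ι, hι, w, jj, hw0, hw1, hjj1, ?_⟩
  rw [← hsum]
  exact Finset.sum_congr rfl fun i _ => by rw [hjj2 i]

/-- quadratic vanishing on `Tim` from the quadratic conditions -/
lemma quad_tim (hTimU : Tim A = ⋃ s, convexHull ℝ (τ '' Jset s)) {z : Fin (n + 1) → ℝ}
    (hq : ∀ i j : J, (∃ s, i ∈ Jset s ∧ j ∈ Jset s) →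
      τ i ⬝ᵥ (Bmat A z).mulVec (τ j) = 0) :
    ∀ v ∈ Tim A, v ⬝ᵥ (Bmat A z) *ᵥ v = 0 := by
  intro v hv
  obtain ⟨s, ι, hι, w, jj, hw0, hw1, hjj, rfl⟩ := tim_rep hTimU v hv
  rw [quad_rep]
  apply Finset.sum_eq_zero
  intro i _
  apply Finset.sum_eq_zero
  intro i' _
  rw [hq (jj i) (jj i') ⟨s, hjj i, hjj i'⟩, mul_zero]

/-- domination on `Tim` from the linear conditions -/
lemma dom_tim (hA : ∀ m, (A m).IsSymm)
    (hTimU : Tim A = ⋃ s, convexHull ℝ (τ '' Jset s))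
    {Y : Matrix (Fin p) (Fin p) ℝ} (hm : maxSlack A Y)
    (hτTim : ∀ j, τ j ∈ Tim A) {B : Matrix (Fin p) (Fin p) ℝ}
    (hlin : ∀ j : J, ∀ k ∈ Mset A τ j, (B *ᵥ τ j) k = 0) :
    ∃ C : ℝ, ∀ v ∈ Tim A, ∀ k, |(B *ᵥ v) k| ≤ C * (Y *ᵥ v) k := by
  classical
  set r : J → Fin p → ℝ := fun j k =>
    if 0 < (Y *ᵥ τ j) k then |(B *ᵥ τ j) k| / (Y *ᵥ τ j) k else 0 with hr
  have hrnn : ∀ j k, 0 ≤ r j k := by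
    intro j k
    rw [hr]
    dsimp only
    split_ifs with h
    · exact div_nonneg (abs_nonneg _) h.le
    · exact le_refl _
  set C : ℝ := ∑ j : J, ∑ k, r j k with hC
  have hrC : ∀ j k, r j k ≤ C := by
    intro j k
    calc r j k ≤ ∑ k', r j k' :=
          Finset.single_le_sum (fun k' _ => hrnn j k') (Finset.mem_univ k)
      _ ≤ C := Finset.single_le_sum (f := fun j' => ∑ k', r j' k')
          (fun j' _ => Finset.sum_nonneg fun k' _ => hrnn j' k') (Finset.mem_univ j)
  have hvertex : ∀ j k, |(B *ᵥ τ j) k| ≤ C * (Y *ᵥ τ j) k := by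
    intro j k
    by_cases hk : k ∈ Mset A τ j
    · rw [hlin j k hk, MsetY hm j k hk]
      simp
    · have hpos := H3 hA hm j (hτTim j) k hk
      have heq : |(B *ᵥ τ j) k| = (|(B *ᵥ τ j) k| / (Y *ᵥ τ j) k) * (Y *ᵥ τ j) k := by
        field_simp
      rw [heq]
      apply mul_le_mul_of_nonneg_right _ hpos.le
      have hrk : r j k = |(B *ᵥ τ j) k| / (Y *ᵥ τ j) k := by
        rw [hr]; simp [hpos]
      rw [← hrk]
      exact hrC j k
  refine ⟨C, ?_⟩
  intro v hv k
  obtain ⟨s, ι, hι, w, jj, hw0, hw1, hjj, rfl⟩ := tim_rep hTimU _ hv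
  rw [mulVec_rep, mulVec_rep]
  calc |∑ i, w i * (B *ᵥ τ (jj i)) k| ≤ ∑ i, |w i * (B *ᵥ τ (jj i)) k| :=
        Finset.abs_sum_le_sum_abs _ _
    _ ≤ ∑ i, w i * (C * (Y *ᵥ τ (jj i)) k) := by
        apply Finset.sum_le_sum
        intro i _
        rw [abs_mul, abs_of_nonneg (hw0 i)]
        exact mul_le_mul_of_nonneg_left (hvertex (jj i) k) (hw0 i)
    _ = C * ∑ i, w i * (Y *ᵥ τ (jj i)) k := by
        rw [Finset.mul_sum]
        exact Finset.sum_congr rfl fun i _ => by ring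

/-- Part III: the quadratic conditions put `B` in the closure of the cone of
feasible directions at a maximum slack. -/
lemma partIII {Y : Matrix (Fin p) (Fin p) ℝ} (hYcop : Y ∈ COP p)
    (hzero : ∀ t ∈ simplexT p, t ⬝ᵥ Y *ᵥ t = 0 → t ∈ Tim A)
    {B : Matrix (Fin p) (Fin p) ℝ} (hBTim : ∀ v ∈ Tim A, v ⬝ᵥ B *ᵥ v = 0) :
    B ∈ closure (dirSet Y) := by
  set E : Matrix (Fin p) (Fin p) ℝ := Matrix.of fun _ _ => (1 : ℝ) with hE
  have hEquad : ∀ t ∈ simplexT p, t ⬝ᵥ E *ᵥ t = 1 := by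
    intro t ht
    have h1 : E *ᵥ t = fun _ => 1 := by
      ext k
      simp [hE, Matrix.mulVec, dotProduct, ht.2]
    rw [h1]
    simpa [dotProduct] using ht.2
  have hdir : ∀ δ : ℝ, 0 < δ → (B + δ • E) ∈ dirSet Y := by
    intro δ hδ
    by_contra hc
    have hbad : ∀ ε : ℝ, 0 < ε → ∃ t ∈ simplexT p, t ⬝ᵥ (Y + ε • (B + δ • E)) *ᵥ t < 0 := by
      intro ε hε
      have hnc : Y + ε • (B + δ • E) ∉ COP p := fun h => hc ⟨ε, hε, h⟩
      rw [copos_iff_simplex] at hnc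
      push_neg at hnc
      obtain ⟨t, ht, hlt⟩ := hnc
      exact ⟨t, ht, hlt⟩
    set e : ℕ → ℝ := fun m => 1 / (m + 1) with he
    have hepos : ∀ m : ℕ, 0 < e m := fun m => by positivity
    have hbad' := fun m => hbad (e m) (hepos m)
    choose t htmem htneg using hbad'
    have hcomp : IsCompact (simplexT p) := by
      have hss : simplexT p = stdSimplex ℝ (Fin p) := rfl
      rw [hss]
      exact isCompact_stdSimplex _ _
    obtain ⟨tbar, htbar, φ, hφ, hconv⟩ := hcomp.tendsto_subseq htmem
    have hval : ∀ m, t m ⬝ᵥ Y *ᵥ t m + e m * (t m ⬝ᵥ B *ᵥ t m + δ) < 0 := by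
      intro m
      have h := htneg m
      rw [quad_add_smul, quad_add_smul, hEquad _ (htmem m)] at h
      linarith
    have hq : Tendsto (fun m => t (φ m) ⬝ᵥ Y *ᵥ t (φ m)) atTop (nhds (tbar ⬝ᵥ Y *ᵥ tbar)) :=
      ((cont_quad Y).tendsto tbar).comp hconv
    have hb : Tendsto (fun m => t (φ m) ⬝ᵥ B *ᵥ t (φ m)) atTop (nhds (tbar ⬝ᵥ B *ᵥ tbar)) :=
      ((cont_quad B).tendsto tbar).comp hconv
    have heφ : Tendsto (fun m => e (φ m)) atTop (nhds 0) := by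
      have h1 : Tendsto e atTop (nhds 0) := by
        have : Tendsto (fun m : ℕ => 1 / ((m : ℝ) + 1)) atTop (nhds 0) :=
          tendsto_one_div_add_atTop_nhds_zero_nat
        exact this
      exact h1.comp hφ.tendsto_atTop
    have hqm : ∀ m, t (φ m) ⬝ᵥ Y *ᵥ t (φ m)
        ≤ e (φ m) * (-(t (φ m) ⬝ᵥ B *ᵥ t (φ m)) - δ) := by
      intro m
      have h := hval (φ m)
      have hring : e (φ m) * (-(t (φ m) ⬝ᵥ B *ᵥ t (φ m)) - δ)
          = -(e (φ m) * (t (φ m) ⬝ᵥ B *ᵥ t (φ m) + δ)) := by ring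
      rw [hring]
      linarith
    have hlim2 : Tendsto (fun m => e (φ m) * (-(t (φ m) ⬝ᵥ B *ᵥ t (φ m)) - δ)) atTop
        (nhds (0 * (-(tbar ⬝ᵥ B *ᵥ tbar) - δ))) := heφ.mul (hb.neg.sub_const δ)
    rw [zero_mul] at hlim2
    have hqbar_le : tbar ⬝ᵥ Y *ᵥ tbar ≤ 0 := le_of_tendsto_of_tendsto' hq hlim2 hqm
    have hqbar0 : tbar ⬝ᵥ Y *ᵥ tbar = 0 := le_antisymm hqbar_le (hYcop tbar htbar.1)
    have htbarTim : tbar ∈ Tim A := hzero tbar htbar hqbar0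
    have hbbar0 : tbar ⬝ᵥ B *ᵥ tbar = 0 := hBTim tbar htbarTim
    have hbm : ∀ m, t (φ m) ⬝ᵥ B *ᵥ t (φ m) + δ ≤ 0 := by
      intro m
      by_contra hpos
      push_neg at hpos
      have h1 : 0 ≤ e (φ m) * (t (φ m) ⬝ᵥ B *ᵥ t (φ m) + δ) :=
        mul_nonneg (hepos (φ m)).le hpos.le
      have h2 := hval (φ m)
      have h3 := hYcop (t (φ m)) (htmem (φ m)).1
      linarith
    have hfin : tbar ⬝ᵥ B *ᵥ tbar + δ ≤ 0 :=
      le_of_tendsto (hb.add_const δ) (Filter.Eventually.of_forall hbm)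
    rw [hbbar0] at hfin
    linarith
  have hseq : Tendsto (fun m : ℕ => B + (1 / ((m : ℝ) + 1)) • E) atTop (nhds B) := by
    have h1 : Tendsto (fun m : ℕ => (1 / ((m : ℝ) + 1))) atTop (nhds 0) :=
      tendsto_one_div_add_atTop_nhds_zero_nat
    have h2 := h1.smul_const E
    rw [zero_smul] at h2
    have h3 : Tendsto (fun m : ℕ => B + (1 / ((m : ℝ) + 1)) • E) atTop (nhds (B + 0)) :=
      Tendsto.add tendsto_const_nhds h2
    rw [add_zero] at h3
    exact h3
  exact mem_closure_of_tendsto hseq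
    (Filter.Eventually.of_forall fun m => hdir _ (by positivity))

/-- Part IV: membership in `ldir` forces the linear conditions. -/
lemma partIV (hA : ∀ m, (A m).IsSymm) {Y : Matrix (Fin p) (Fin p) ℝ} (hm : maxSlack A Y)
    (hτTim : ∀ j, τ j ∈ Tim A) (hJcover : (⋃ s, Jset s) = Set.univ)
    {z : Fin (n + 1) → ℝ}
    (hq : ∀ i j : J, (∃ s, i ∈ Jset s ∧ j ∈ Jset s) →
      τ i ⬝ᵥ (Bmat A z).mulVec (τ j) = 0)
    (hldir : Bmat A z ∈ dirSet Y ∩ -dirSet Y) :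
    ∀ j : J, ∀ k ∈ Mset A τ j, (Bmat A z).mulVec (τ j) k = 0 := by
  obtain ⟨⟨ε₁, hε₁, hcop₁⟩, hneg⟩ := hldir
  rw [Set.mem_neg] at hneg
  obtain ⟨ε₂, hε₂, hcop₂⟩ := hneg
  intro j k hk
  obtain ⟨s, hjs⟩ : ∃ s, j ∈ Jset s := Set.mem_iUnion.1 (hJcover ▸ Set.mem_univ j)
  have hqjj : τ j ⬝ᵥ (Bmat A z) *ᵥ τ j = 0 := hq j j ⟨s, hjs, hjs⟩
  have hYτ0 : τ j ⬝ᵥ Y *ᵥ τ j = 0 := TimY hm _ (hτTim j)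
  have hYk : (Y *ᵥ τ j) k = 0 := MsetY hm j k hk
  have hBsym : (Bmat A z).IsSymm := Bmat_isSymm A hA z
  have hYsym := maxSlack_symm hA hm
  have hs₁ : (Y + ε₁ • Bmat A z).IsSymm := hYsym.add (hBsym.smul _)
  have hz₁ : τ j ⬝ᵥ (Y + ε₁ • Bmat A z) *ᵥ τ j = 0 := by
    rw [quad_add_smul, hYτ0, hqjj]; ring
  have hfo₁ := copos_first_order _ hs₁ hcop₁ (τ j) (hτTim j).1.1 hz₁ k
  rw [mulVec_add_smul, hYk] at hfo₁
  have hs₂ : (Y + ε₂ • (-Bmat A z)).IsSymm := hYsym.add (hBsym.neg.smul _)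
  have hz₂ : τ j ⬝ᵥ (Y + ε₂ • (-Bmat A z)) *ᵥ τ j = 0 := by
    rw [quad_add_smul, hYτ0, quad_neg, hqjj]; ring
  have hfo₂ := copos_first_order _ hs₂ hcop₂ (τ j) (hτTim j).1.1 hz₂ k
  rw [mulVec_add_smul, hYk] at hfo₂
  have hneg' : ((-Bmat A z) *ᵥ τ j) k = -((Bmat A z *ᵥ τ j) k) := by
    rw [Matrix.neg_mulVec]; simp
  rw [hneg'] at hfo₂
  nlinarith

/-- Part HL: quadratic and linear conditions put `B` in `ldir`. -/
lemma partHL (hA : ∀ m, (A m).IsSymm)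
    (hTimU : Tim A = ⋃ s, convexHull ℝ (τ '' Jset s))
    {Y : Matrix (Fin p) (Fin p) ℝ} (hm : maxSlack A Y)
    (hτTim : ∀ j, τ j ∈ Tim A)
    {z : Fin (n + 1) → ℝ}
    (hl : ∀ j : J, ∀ k ∈ Mset A τ j, (Bmat A z).mulVec (τ j) k = 0) :
    Bmat A z ∈ dirSet Y ∩ -dirSet Y := by
  have hYcop := maxSlack_cop hm
  have hYsym := maxSlack_symm hA hm
  have hBsym : (Bmat A z).IsSymm := Bmat_isSymm A hA z
  obtain ⟨C, hC⟩ := dom_tim hA hTimU hm hτTim hl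
  have hzero := H2 hA hm
  have h2 : ∀ t ∈ simplexT p, t ⬝ᵥ Y *ᵥ t = 0 → ∀ k, |(Bmat A z *ᵥ t) k| ≤ C * (Y *ᵥ t) k :=
    fun t ht h0 k => hC t (hzero t ht h0) k
  obtain ⟨ε₁, hε₁, hcop₁⟩ := hard_lemma Y (Bmat A z) hYsym hBsym hYcop C h2
  have h2' : ∀ t ∈ simplexT p, t ⬝ᵥ Y *ᵥ t = 0 →
      ∀ k, |((-Bmat A z) *ᵥ t) k| ≤ C * (Y *ᵥ t) k := by
    intro t ht h0 k
    rw [Matrix.neg_mulVec]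
    simpa using h2 t ht h0 k
  obtain ⟨ε₂, hε₂, hcop₂⟩ := hard_lemma Y (-Bmat A z) hYsym hBsym.neg hYcop C h2'
  exact ⟨⟨ε₁, hε₁, hcop₁⟩, Set.mem_neg.2 ⟨ε₂, hε₂, hcop₂⟩⟩


/-- Part II: tangency forces the quadratic conditions. -/
lemma partII (hA : ∀ m, (A m).IsSymm) {Y : Matrix (Fin p) (Fin p) ℝ} (hm : maxSlack A Y)
    (hτTim : ∀ j, τ j ∈ Tim A)
    (hTimU : Tim A = ⋃ s, convexHull ℝ (τ '' Jset s))
    {z : Fin (n + 1) → ℝ}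
    (hcl1 : Bmat A z ∈ closure (dirSet Y)) (hcl2 : Bmat A z ∈ -closure (dirSet Y)) :
    ∀ i j : J, (∃ s, i ∈ Jset s ∧ j ∈ Jset s) →
      τ i ⬝ᵥ (Bmat A z).mulVec (τ j) = 0 := by
  rintro i j ⟨s, his, hjs⟩
  set B := Bmat A z with hB
  have hBsym : B.IsSymm := Bmat_isSymm A hA z
  have hquadzero : ∀ t ∈ Tim A, t ⬝ᵥ B *ᵥ t = 0 := by
    intro t ht
    have hY0 : t ⬝ᵥ Y *ᵥ t = 0 := TimY hm t ht
    have h1 : 0 ≤ t ⬝ᵥ B *ᵥ t := closure_dir_nonneg hcl1 t ht.1.1 hY0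
    have h2 : 0 ≤ t ⬝ᵥ (-B) *ᵥ t := closure_dir_nonneg (Set.mem_neg.1 hcl2) t ht.1.1 hY0
    rw [quad_neg] at h2
    linarith
  set mid : Fin p → ℝ := (1/2 : ℝ) • τ i + (1/2 : ℝ) • τ j with hmdef
  have hmTim : mid ∈ Tim A := by
    rw [hTimU]
    refine Set.mem_iUnion.2 ⟨s, ?_⟩
    have h1 : τ i ∈ convexHull ℝ (τ '' Jset s) := subset_convexHull ℝ _ ⟨i, his, rfl⟩
    have h2 : τ j ∈ convexHull ℝ (τ '' Jset s) := subset_convexHull ℝ _ ⟨j, hjs, rfl⟩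
    exact (convex_convexHull ℝ _) h1 h2 (by norm_num) (by norm_num) (by norm_num)
  have hii := hquadzero _ (hτTim i)
  have hjj := hquadzero _ (hτTim j)
  have hmm := hquadzero _ hmTim
  have e1 : B *ᵥ mid = (1/2 : ℝ) • (B *ᵥ τ i) + (1/2 : ℝ) • (B *ᵥ τ j) := by
    rw [hmdef, Matrix.mulVec_add, Matrix.mulVec_smul, Matrix.mulVec_smul]
  have hexp : mid ⬝ᵥ B *ᵥ mid
      = (1/4) * (τ i ⬝ᵥ B *ᵥ τ i) + (1/2) * (τ i ⬝ᵥ B *ᵥ τ j)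
        + (1/4) * (τ j ⬝ᵥ B *ᵥ τ j) := by
    conv_lhs => rw [e1, hmdef]
    rw [add_dotProduct, smul_dotProduct, smul_dotProduct,
      dotProduct_add, dotProduct_add, dotProduct_smul,
      dotProduct_smul, dotProduct_smul, dotProduct_smul]
    have hcross : τ j ⬝ᵥ (B *ᵥ τ i) = τ i ⬝ᵥ (B *ᵥ τ j) := dot_symm B hBsym (τ j) (τ i)
    simp only [smul_eq_mul]
    rw [hcross]
    ring
  rw [hii, hjj, hmm] at hexp
  have : τ i ⬝ᵥ B *ᵥ τ j = 0 := by linarith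
  exact this

lemma COP_convex : Convex ℝ (COP p) := by
  intro M hM N hN a b ha hb hab
  intro t ht
  have hexp : t ⬝ᵥ (a • M + b • N) *ᵥ t = a * (t ⬝ᵥ M *ᵥ t) + b * (t ⬝ᵥ N *ᵥ t) := by
    rw [Matrix.add_mulVec, dotProduct_add, Matrix.smul_mulVec,
      Matrix.smul_mulVec, dotProduct_smul, dotProduct_smul]
    simp
  rw [hexp]
  have h1 := hM t ht
  have h2 := hN t ht
  nlinarith

lemma slack_affine (A' : Fin (n + 1) → Matrix (Fin p) (Fin p) ℝ) {a b : ℝ} (hab : a + b = 1)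
    (x y : Fin n → ℝ) :
    slack A' (a • x + b • y) = a • slack A' x + b • slack A' y := by
  have hgoal : a • slack A' x + b • slack A' y
      = (a + b) • A' 0 + ∑ m : Fin n, (a * x m + b * y m) • A' m.succ := by
    simp only [slack, smul_add, Finset.smul_sum, smul_smul, add_smul, Finset.sum_add_distrib]
    abel
  rw [hgoal, hab, one_smul]
  simp only [slack, Pi.add_apply, Pi.smul_apply, smul_eq_mul]

section NI
attribute [local instance] Matrix.normedAddCommGroup Matrix.normedSpace

lemma exists_maxSlack (hX : (feasX A).Nonempty) : ∃ Y, maxSlack A Y := by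
  have hconv : Convex ℝ {D : Matrix (Fin p) (Fin p) ℝ | ∃ x ∈ feasX A, D = slack A x} := by
    rintro D₁ ⟨x₁, hx₁, rfl⟩ D₂ ⟨x₂, hx₂, rfl⟩ a b ha hb hab
    refine ⟨a • x₁ + b • x₂, ?_, (slack_affine A hab x₁ x₂).symm⟩
    show slack A (a • x₁ + b • x₂) ∈ COP p
    rw [slack_affine A hab]
    exact COP_convex hx₁ hx₂ ha hb hab
  obtain ⟨x₀, hx₀⟩ := hX
  have hne : {D : Matrix (Fin p) (Fin p) ℝ | ∃ x ∈ feasX A, D = slack A x}.Nonempty :=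
    ⟨slack A x₀, x₀, hx₀, rfl⟩
  obtain ⟨Y, hY⟩ := Set.Nonempty.intrinsicInterior hconv hne
  exact ⟨Y, hY⟩

end NI

end MainFacts

end Aux

open Aux

/-- Condition B1) holds iff for any maximum slack `Y*` the set
`{B(z)} ∩ (tan(Y*, COP^p) \ ldir(Y*, COP^p))` is empty. -/
theorem stmt_9
    {n p : ℕ} (hp : 1 < p) (hn : 1 ≤ n)
    (A : Fin (n + 1) → Matrix (Fin p) (Fin p) ℝ) (hA : ∀ m, (A m).IsSymm)
    (hX : (feasX A).Nonempty)
    (hTim : (Tim A).Nonempty)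
    (J : Type) [Fintype J] [Nonempty J]
    (τ : J → Fin p → ℝ) (hτinj : Function.Injective τ)
    (hτ : Set.range τ = Set.extremePoints ℝ (convexHull ℝ (Tim A)))
    (S : Type) [Fintype S] (Jset : S → Set J)
    (hJne : ∀ s, (Jset s).Nonempty)
    (hJdisj : ∀ s s', s ≠ s' → Disjoint (Jset s) (Jset s'))
    (hJcover : (⋃ s, Jset s) = Set.univ)
    (hTimU : Tim A = ⋃ s, convexHull ℝ (τ '' Jset s))
    (hPsub : ∀ s, ∀ j ∈ Jset s, {k : Fin p | ∃ j' ∈ Jset s, 0 < τ j' k} ⊆ Mset A τ j) :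
    (∀ z : Fin (n + 1) → ℝ,
      (∀ i j : J, (∃ s, i ∈ Jset s ∧ j ∈ Jset s) →
        τ i ⬝ᵥ (Bmat A z).mulVec (τ j) = 0) →
      ∀ j : J, ∀ k ∈ Mset A τ j, (Bmat A z).mulVec (τ j) k = 0) ↔
      ∀ Ystar : Matrix (Fin p) (Fin p) ℝ, maxSlack A Ystar →
        {D | ∃ z : Fin (n + 1) → ℝ, D = Bmat A z} ∩
          (((closure (dirSet Ystar) ∩ -closure (dirSet Ystar)) : Set (Matrix (Fin p) (Fin p) ℝ)) \
            (dirSet Ystar ∩ -dirSet Ystar)) = ∅ := by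
  have hτTim : ∀ j, τ j ∈ Tim A := by
    intro j
    have h1 : τ j ∈ Set.extremePoints ℝ (convexHull ℝ (Tim A)) := hτ ▸ Set.mem_range_self j
    exact extremePoints_convexHull_subset h1
  constructor
  · -- B1 implies the emptiness for every maximum slack
    intro hB1 Y hm
    rw [Set.eq_empty_iff_forall_notMem]
    rintro D ⟨⟨z, rfl⟩, ⟨⟨hcl1, hcl2⟩, hnl⟩⟩
    have hq := partII hA hm hτTim hTimU hcl1 hcl2
    have hl := hB1 z hq
    exact hnl (partHL hA hTimU hm hτTim hl)
  · -- emptiness implies B1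
    intro hRHS z hq
    obtain ⟨Y, hm⟩ := exists_maxSlack hX
    have hempty := hRHS Y hm
    have hBTim : ∀ v ∈ Tim A, v ⬝ᵥ (Bmat A z) *ᵥ v = 0 := quad_tim hTimU hq
    have ht1 : Bmat A z ∈ closure (dirSet Y) :=
      partIII (maxSlack_cop hm) (H2 hA hm) hBTim
    have hBTim' : ∀ v ∈ Tim A, v ⬝ᵥ (-Bmat A z) *ᵥ v = 0 := by
      intro v hv
      rw [quad_neg, hBTim v hv, neg_zero]
    have ht2 : (-Bmat A z) ∈ closure (dirSet Y) :=
      partIII (maxSlack_cop hm) (H2 hA hm) hBTim'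
    have ht2' : Bmat A z ∈ -closure (dirSet Y) := Set.mem_neg.2 ht2
    have hldir : Bmat A z ∈ dirSet Y ∩ -dirSet Y := by
      by_contra hc
      have hmem : Bmat A z ∈ {D | ∃ z' : Fin (n + 1) → ℝ, D = Bmat A z'} ∩
          (((closure (dirSet Y) ∩ -closure (dirSet Y)) : Set (Matrix (Fin p) (Fin p) ℝ)) \
            (dirSet Y ∩ -dirSet Y)) := ⟨⟨z, rfl⟩, ⟨⟨ht1, ht2'⟩, hc⟩⟩
      rw [hempty] at hmem
      exact hmem
    exact partIV hA hm hτTim hJcover hq hldir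
end
end

section
/- If the consistent system A(x) ∈ COP^p yields uniform LP duality, then Condition I) holds, i.e. b(k,j) ∈ cone({a(t) : t ∈ T_im}) for all k ∈ M(j) and all j ∈ J. -/
open Matrix Set Pointwise
open scoped Classical

noncomputable section

lemma trace_mul_vecMulVec' {p : ℕ} (M : Matrix (Fin p) (Fin p) ℝ) (t : Fin p → ℝ) :
    (M * vecMulVec t t).trace = t ⬝ᵥ M.mulVec t := by
  simp only [Matrix.trace, Matrix.diag, Matrix.mul_apply, Matrix.vecMulVec_apply,
    dotProduct, Matrix.mulVec, Finset.mul_sum]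
  exact Finset.sum_congr rfl fun a _ => Finset.sum_congr rfl fun b _ => by ring

lemma mem_coneOf_of_fintype {E : Type*} [AddCommMonoid E] [Module ℝ E] {S : Set E}
    {ι : Type*} [Fintype ι] (c : ι → ℝ) (v : ι → E)
    (hc : ∀ i, 0 ≤ c i) (hv : ∀ i, v i ∈ S) :
    (∑ i, c i • v i) ∈ coneOf S := by
  classical
  obtain ⟨e⟩ := Fintype.truncEquivFin ι
  exact ⟨Fintype.card ι, c ∘ e.symm, v ∘ e.symm, fun i => hc _, fun i => hv _,
    Fintype.sum_equiv e _ _ (fun i => by simp)⟩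

lemma sum_mulVec' {ι p : ℕ} {κ : Type*} [Fintype κ] (M : κ → Matrix (Fin ι) (Fin p) ℝ)
    (v : Fin p → ℝ) : (∑ m, M m).mulVec v = ∑ m, (M m).mulVec v := by
  ext a
  simp [Matrix.mulVec, dotProduct, Matrix.sum_apply, Finset.sum_mul]
  exact Finset.sum_comm

lemma slack_mulVec_apply {n p : ℕ} (A : Fin (n + 1) → Matrix (Fin p) (Fin p) ℝ)
    (x : Fin n → ℝ) (v : Fin p → ℝ) (k : Fin p) :
    (slack A x).mulVec v k = (A 0).mulVec v k + ∑ m, x m * (A m.succ).mulVec v k := by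
  rw [slack, Matrix.add_mulVec, sum_mulVec']
  simp [Matrix.smul_mulVec, Finset.sum_apply]

lemma trace_slack_mul {n p : ℕ} (A : Fin (n + 1) → Matrix (Fin p) (Fin p) ℝ)
    (x : Fin n → ℝ) (U : Matrix (Fin p) (Fin p) ℝ) :
    (slack A x * U).trace = (A 0 * U).trace + ∑ m, x m * (A m.succ * U).trace := by
  rw [slack, Matrix.add_mul, Finset.sum_mul, Matrix.trace_add, Matrix.trace_sum]
  simp [Matrix.smul_mul, Matrix.trace_smul, smul_eq_mul]

/-- If the consistent system `𝒜(x) ∈ COP^p` yields uniform LP duality, then Condition I)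
holds: `b(k,j) ∈ cone {a(t) : t ∈ T_im}` for all `k ∈ M(j)`, `j ∈ J`. -/
theorem stmt_10
    {n p : ℕ} (hp : 1 < p) (hn : 1 ≤ n)
    (A : Fin (n + 1) → Matrix (Fin p) (Fin p) ℝ) (hA : ∀ m, (A m).IsSymm)
    (hX : (feasX A).Nonempty)
    (hTim : (Tim A).Nonempty)
    (J : Type) [Fintype J] [Nonempty J]
    (τ : J → Fin p → ℝ) (hτinj : Function.Injective τ)
    (hτ : Set.range τ = Set.extremePoints ℝ (convexHull ℝ (Tim A)))
    (hUD : UniformLPDuality A) :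
    ∀ j : J, ∀ k ∈ Mset A τ j, bvec A τ k j ∈ coneOf (avec A '' Tim A) := by
  intro j k hk
  set b : Fin (n + 1) → ℝ := bvec A τ k j with hb
  have hconst : ∀ x ∈ feasX A, ∑ i, b i.succ * x i = -(b 0) := by
    intro x hx
    have h0 := hk x hx
    rw [slack_mulVec_apply] at h0
    have hstep : ∑ i, b i.succ * x i = ∑ i, x i * (A i.succ).mulVec (τ j) k :=
      Finset.sum_congr rfl fun i _ => mul_comm _ _
    rw [hstep]
    show _ = -((A 0).mulVec (τ j) k)
    linarith
  have himg : (fun x => ∑ i, b i.succ * x i) '' feasX A = {-(b 0)} := by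
    apply Subset.antisymm
    · rintro _ ⟨x, hx, rfl⟩; exact hconst x hx
    · rintro y (rfl : y = -(b 0))
      obtain ⟨x0, hx0⟩ := hX
      exact ⟨x0, hx0, hconst x0 hx0⟩
  have hbdd : BddBelow ((fun x => ∑ i, b i.succ * x i) '' feasX A) := by
    rw [himg]; exact bddBelow_singleton
  obtain ⟨U, hU, hUm, hU0⟩ := hUD (fun i => b i.succ) hbdd
  have hU0' : (A 0 * U).trace = b 0 := by
    rw [hU0, himg, csInf_singleton, neg_neg]
  have htr : ∀ m : Fin (n + 1), (A m * U).trace = b m := by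
    intro m
    refine Fin.cases ?_ ?_ m
    · exact hU0'
    · exact hUm
  rw [CPcone, mem_convexHull_iff_exists_fintype] at hU
  obtain ⟨ι, _inst, w, z, hw0, hw1, hz, hzU⟩ := hU
  choose t ht0 htz using hz
  -- trace of M * U as a sum
  have htrU : ∀ M : Matrix (Fin p) (Fin p) ℝ,
      (M * U).trace = ∑ i, w i * (t i ⬝ᵥ M.mulVec (t i)) := by
    intro M
    rw [← hzU, Finset.mul_sum, Matrix.trace_sum]
    refine Finset.sum_congr rfl fun i _ => ?_
    rw [Matrix.mul_smul, Matrix.trace_smul, smul_eq_mul, htz, trace_mul_vecMulVec']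
  -- each quadratic-form term vanishes on the feasible set
  have hzero : ∀ x ∈ feasX A, ∀ i, w i * (t i ⬝ᵥ (slack A x).mulVec (t i)) = 0 := by
    intro x hx
    have hsum : ∑ i, w i * (t i ⬝ᵥ (slack A x).mulVec (t i)) = 0 := by
      rw [← htrU, trace_slack_mul, hU0']
      simp only [hUm]
      have h1 : ∑ m, x m * b m.succ = -(b 0) := by
        rw [← hconst x hx]
        exact Finset.sum_congr rfl fun i _ => mul_comm _ _
      linarith
    have hnn : ∀ i ∈ Finset.univ, 0 ≤ w i * (t i ⬝ᵥ (slack A x).mulVec (t i)) :=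
      fun i _ => mul_nonneg (hw0 i) (hx (t i) (ht0 i))
    intro i
    exact (Finset.sum_eq_zero_iff_of_nonneg hnn).1 hsum i (Finset.mem_univ i)
  obtain ⟨t₀, ht₀⟩ := hTim
  set σ : ι → ℝ := fun i => ∑ l, t i l with hσ
  have hσnn : ∀ i, 0 ≤ σ i := fun i => Finset.sum_nonneg fun l _ => ht0 i l
  set s : ι → Fin p → ℝ := fun i => if w i = 0 ∨ σ i = 0 then t₀ else (σ i)⁻¹ • t i with hs
  set c : ι → ℝ := fun i => w i * (σ i) ^ 2 with hc
  have hsTim : ∀ i, s i ∈ Tim A := by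
    intro i
    by_cases hcase : w i = 0 ∨ σ i = 0
    · simp only [hs, hcase, if_true]; exact ht₀
    · push_neg at hcase
      obtain ⟨hwne, hσne⟩ := hcase
      simp only [hs, if_neg (not_or.2 ⟨hwne, hσne⟩)]
      have hσpos : 0 < σ i := lt_of_le_of_ne (hσnn i) (Ne.symm hσne)
      refine ⟨⟨fun l => mul_nonneg (inv_nonneg.2 hσpos.le) (ht0 i l), ?_⟩, ?_⟩
      · simp only [Pi.smul_apply, smul_eq_mul, ← Finset.mul_sum, ← hσ]
        field_simp
        rfl
      · intro x hx
        have h := hzero x hx i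
        have hq : t i ⬝ᵥ (slack A x).mulVec (t i) = 0 :=
          (mul_eq_zero.1 h).resolve_left hwne
        rw [Matrix.mulVec_smul, dotProduct_smul, smul_dotProduct, hq]
        simp
  have hcnn : ∀ i, 0 ≤ c i := fun i => mul_nonneg (hw0 i) (sq_nonneg _)
  have hcomb : ∀ i, w i • avec A (t i) = c i • avec A (s i) := by
    intro i
    by_cases hw : w i = 0
    · simp [hc, hw]
    by_cases hσ0 : σ i = 0
    · have ht00 : t i = 0 := by
        funext l
        exact (Finset.sum_eq_zero_iff_of_nonneg (fun l _ => ht0 i l)).1 hσ0 l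
          (Finset.mem_univ l)
      have havec : avec A (t i) = 0 := by funext m; simp [avec, ht00]
      simp [hc, hσ0, havec]
    · have hne : ¬(w i = 0 ∨ σ i = 0) := not_or.2 ⟨hw, hσ0⟩
      simp only [hs, hc, if_neg hne]
      funext m
      simp only [Pi.smul_apply, smul_eq_mul, avec, Matrix.mulVec_smul, dotProduct_smul,
        smul_dotProduct, smul_eq_mul]
      field_simp
  have hbsum : b = ∑ i, w i • avec A (t i) := by
    funext m
    rw [← htr m, htrU]
    rw [Finset.sum_apply]
    exact Finset.sum_congr rfl fun i _ => by simp [avec]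
  have : b = ∑ i, c i • avec A (s i) := by
    rw [hbsum]
    exact Finset.sum_congr rfl fun i _ => hcomb i
  rw [hb] at this ⊢
  rw [this]
  exact mem_coneOf_of_fintype c (fun i => avec A (s i)) hcnn
    (fun i => ⟨s i, hsTim i, rfl⟩)
end
end

section
/- For every z ∈ ℝ^{n+1}, the equalities τ(i)ᵀB(z)τ(j) = 0 for all (i,j) ∈ V_0 hold if and only if tᵀB(z)t = 0 for all t ∈ T_im. -/
open Matrix Set Pointwise
open scoped Classical

noncomputable section

lemma my_sum_dotProduct {p : ℕ} {ι : Type*} (F : Finset ι) (c : ι → ℝ) (v : ι → Fin p → ℝ)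
    (w : Fin p → ℝ) :
    (∑ i ∈ F, c i • v i) ⬝ᵥ w = ∑ i ∈ F, c i * (v i ⬝ᵥ w) := by
  simp [dotProduct, Finset.sum_mul, Finset.mul_sum, Finset.sum_apply, mul_assoc]
  rw [Finset.sum_comm]

lemma my_mulVec_sum {p : ℕ} {ι : Type*} (M : Matrix (Fin p) (Fin p) ℝ) (F : Finset ι)
    (c : ι → ℝ) (v : ι → Fin p → ℝ) :
    M *ᵥ (∑ j ∈ F, c j • v j) = ∑ j ∈ F, c j • (M *ᵥ v j) := by
  rw [← Matrix.mulVecLin_apply, map_sum]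
  simp [Matrix.mulVec_smul]

lemma my_bilin_sum {p : ℕ} {ι : Type*} (M : Matrix (Fin p) (Fin p) ℝ) (F : Finset ι)
    (c : ι → ℝ) (v : ι → Fin p → ℝ) :
    (∑ i ∈ F, c i • v i) ⬝ᵥ M *ᵥ (∑ j ∈ F, c j • v j)
      = ∑ i ∈ F, ∑ j ∈ F, c i * c j * (v i ⬝ᵥ M *ᵥ v j) := by
  rw [my_mulVec_sum, my_sum_dotProduct]
  refine Finset.sum_congr rfl fun i _ => ?_
  rw [dotProduct_comm, my_sum_dotProduct, Finset.mul_sum]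
  refine Finset.sum_congr rfl fun j _ => ?_
  rw [dotProduct_comm]
  ring

/-- For every `z`, `τ(i)ᵀB(z)τ(j) = 0` for all `(i,j) ∈ V₀` iff `tᵀB(z)t = 0` for all
`t ∈ T_im`. -/
theorem stmt_12
    {n p : ℕ} (hp : 1 < p) (hn : 1 ≤ n)
    (A : Fin (n + 1) → Matrix (Fin p) (Fin p) ℝ) (hA : ∀ m, (A m).IsSymm)
    (hX : (feasX A).Nonempty)
    (hTim : (Tim A).Nonempty)
    (J : Type) [Fintype J] [Nonempty J]
    (τ : J → Fin p → ℝ) (hτinj : Function.Injective τ)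
    (hτ : Set.range τ = Set.extremePoints ℝ (convexHull ℝ (Tim A)))
    (S : Type) [Fintype S] (Jset : S → Set J)
    (hJne : ∀ s, (Jset s).Nonempty)
    (hJdisj : ∀ s s', s ≠ s' → Disjoint (Jset s) (Jset s'))
    (hJcover : (⋃ s, Jset s) = Set.univ)
    (hTimU : Tim A = ⋃ s, convexHull ℝ (τ '' Jset s))
    (hPsub : ∀ s, ∀ j ∈ Jset s, {k : Fin p | ∃ j' ∈ Jset s, 0 < τ j' k} ⊆ Mset A τ j) :
    ∀ z : Fin (n + 1) → ℝ,
      (∀ i j : J, (∃ s, i ∈ Jset s ∧ j ∈ Jset s) →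
        τ i ⬝ᵥ (Bmat A z).mulVec (τ j) = 0) ↔
      (∀ t ∈ Tim A, t ⬝ᵥ (Bmat A z).mulVec t = 0)  := by
  intro z
  have hBsymm : (Bmat A z).IsSymm := by
    unfold Bmat
    simp [Matrix.IsSymm, Matrix.transpose_sum, Matrix.transpose_smul,
      fun m => (hA m).eq]
  have hsymm_bilin : ∀ u v : Fin p → ℝ,
      u ⬝ᵥ (Bmat A z) *ᵥ v = v ⬝ᵥ (Bmat A z) *ᵥ u := by
    intro u v
    rw [Matrix.dotProduct_mulVec, ← Matrix.mulVec_transpose, hBsymm.eq,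
      dotProduct_comm]
  have hτmem : ∀ (s : S) (j : J), j ∈ Jset s → τ j ∈ Tim A := by
    intro s j hj
    rw [hTimU]
    exact Set.mem_iUnion.2 ⟨s, subset_convexHull ℝ _ ⟨j, hj, rfl⟩⟩
  constructor
  · intro h t ht
    rw [hTimU] at ht
    obtain ⟨s, hts⟩ := Set.mem_iUnion.1 ht
    rw [convexHull_eq] at hts
    obtain ⟨ι, F, w, zf, hw0, hw1, hzf, hcm⟩ := hts
    have ht' : t = ∑ i ∈ F, w i • zf i := by
      rw [← hcm, Finset.centerMass_eq_of_sum_1 _ _ hw1]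
    rw [ht', my_bilin_sum]
    refine Finset.sum_eq_zero fun i hi => Finset.sum_eq_zero fun j hj => ?_
    obtain ⟨ji, hji, hji'⟩ := hzf i hi
    obtain ⟨jj, hjj, hjj'⟩ := hzf j hj
    rw [← hji', ← hjj', h ji jj ⟨s, hji, hjj⟩, mul_zero]
  · rintro h i j ⟨s, hi, hj⟩
    have hii := h (τ i) (hτmem s i hi)
    have hjj := h (τ j) (hτmem s j hj)
    have hmid : (1/2 : ℝ) • τ i + (1/2 : ℝ) • τ j ∈ Tim A := by
      rw [hTimU]
      refine Set.mem_iUnion.2 ⟨s, ?_⟩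
      exact (convex_convexHull ℝ _) (subset_convexHull ℝ _ (Set.mem_image_of_mem τ hi))
        (subset_convexHull ℝ _ (Set.mem_image_of_mem τ hj)) (by norm_num) (by norm_num) (by norm_num)
    have hmm := h _ hmid
    simp only [Matrix.mulVec_add, Matrix.mulVec_smul, dotProduct_add,
      add_dotProduct, smul_dotProduct, dotProduct_smul,
      smul_eq_mul] at hmm
    have hsym := hsymm_bilin (τ i) (τ j)
    linarith
end
end

section
/- Let s be a positive integer and {a(i) : i ∈ I} a family of vectors in ℝ^s, where I is an arbitrary (possibly infinite) index set. Then cone({a(i) : i ∈ I}) is a linear subspace of ℝ^s if and only if there exist a finite subset J ⊆ I and numbers α_j > 0, j ∈ J, such that Σ_{j∈J} α_j a(j) = 0 and dim span({a(j) : j ∈ J}) = dim span({a(i) : i ∈ I}). -/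
open Matrix Set Pointwise
open scoped Classical

noncomputable section

section AuxConeLemmas
variable {E : Type*} [AddCommMonoid E] [Module ℝ E]

lemma subset_coneOf (S : Set E) : S ⊆ coneOf S := fun x hx =>
  ⟨1, fun _ => 1, fun _ => x, fun _ => zero_le_one, fun _ => hx, by simp⟩

lemma coneOf_subset_span (S : Set E) : coneOf S ⊆ (Submodule.span ℝ S : Set E) := by
  rintro x ⟨k, c, v, hc, hv, rfl⟩
  exact Submodule.sum_mem _ fun i _ =>
    Submodule.smul_mem _ _ (Submodule.subset_span (hv i))

lemma finsetSum_mem_coneOf {S : Set E} {ι : Type*} (J : Finset ι) (c : ι → ℝ) (v : ι → E)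
    (hc : ∀ j ∈ J, 0 ≤ c j) (hv : ∀ j ∈ J, v j ∈ S) :
    (∑ j ∈ J, c j • v j) ∈ coneOf S := by
  refine ⟨J.card, fun i => c (J.equivFin.symm i), fun i => v (J.equivFin.symm i),
    fun i => hc _ (J.equivFin.symm i).2, fun i => hv _ (J.equivFin.symm i).2, ?_⟩
  rw [← Finset.sum_attach J (fun j => c j • v j)]
  exact Fintype.sum_equiv J.equivFin _ _ (fun x => by simp)

end AuxConeLemmas

/-- `cone {a(i) : i ∈ I}` is a linear subspace iff some finite positive combination of the
`a(j)` vanishes, with the chosen vectors spanning the same subspace as the whole family. -/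
theorem stmt_13 (s : ℕ) (hs : 0 < s) {I : Type*} (a : I → Fin s → ℝ) :
    (∃ W : Submodule ℝ (Fin s → ℝ), (W : Set (Fin s → ℝ)) = coneOf (Set.range a)) ↔
      ∃ (J : Finset I) (α : I → ℝ),
        (∀ j ∈ J, 0 < α j) ∧ (∑ j ∈ J, α j • a j) = 0 ∧
        Module.finrank ℝ ↥(Submodule.span ℝ (a '' (J : Set I))) =
          Module.finrank ℝ ↥(Submodule.span ℝ (Set.range a)) := by
  constructor
  · rintro ⟨W, hW⟩
    have hle : Submodule.span ℝ (Set.range a) ≤ W := by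
      rw [Submodule.span_le, hW]
      exact subset_coneOf _
    -- finite spanning subset
    obtain ⟨b, hbsub, hbspan, hbind⟩ := exists_linearIndependent ℝ (Set.range a)
    have hbfin : b.Finite := hbind.setFinite
    have hex : ∀ x : b, ∃ j : I, a j = (x : Fin s → ℝ) := fun x => hbsub x.2
    choose g hg using hex
    have : Fintype b := hbfin.fintype
    set J₀ : Finset I := Finset.univ.image g with hJ₀def
    have haJ₀ : a '' (J₀ : Set I) = b := by
      ext x
      constructor
      · rintro ⟨j, hj, rfl⟩
        simp only [hJ₀def, Finset.coe_image, Finset.coe_univ, Set.image_univ] at hj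
        obtain ⟨y, rfl⟩ := hj
        rw [hg y]; exact y.2
      · intro hx
        exact ⟨g ⟨x, hx⟩, by simp [hJ₀def], hg ⟨x, hx⟩⟩
    have spanJ₀ : Submodule.span ℝ (a '' (J₀ : Set I)) = Submodule.span ℝ (Set.range a) := by
      rw [haJ₀, hbspan]
    set v : Fin s → ℝ := ∑ j ∈ J₀, a j with hvdef
    have hvW : -v ∈ W := by
      refine neg_mem (Submodule.sum_mem _ fun j _ => hle ?_)
      exact Submodule.subset_span (Set.mem_range_self j)
    have hvc : -v ∈ coneOf (Set.range a) := by rw [← hW]; exact hvW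
    obtain ⟨k, c, w, hc, hw, hsum⟩ := hvc
    choose t ht using hw
    have hsum' : -v = ∑ i, c i • a (t i) := by rw [hsum]; exact Finset.sum_congr rfl fun i _ => by rw [ht]
    set α : I → ℝ := fun j => (if j ∈ J₀ then (1:ℝ) else 0) + ∑ i : Fin k, if t i = j then c i else 0 with hαdef
    set J : Finset I := J₀ ∪ (Finset.univ.filter fun i => c i ≠ 0).image t with hJdef
    have hnn : ∀ j, 0 ≤ ∑ i : Fin k, if t i = j then c i else 0 := fun j =>
      Finset.sum_nonneg fun i _ => by by_cases h : t i = j <;> simp [h, hc i]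
    refine ⟨J, α, ?_, ?_, ?_⟩
    · intro j hj
      rcases Finset.mem_union.mp hj with h | h
      · exact add_pos_of_pos_of_nonneg (by simp [hαdef, h]) (hnn j)
      · obtain ⟨i, hi, rfl⟩ := Finset.mem_image.mp h
        have hci : 0 < c i := lt_of_le_of_ne (hc i) (Ne.symm (Finset.mem_filter.mp hi).2)
        refine add_pos_of_nonneg_of_pos (by split <;> norm_num) ?_
        calc (0:ℝ) < c i := hci
          _ = if t i = t i then c i else 0 := by rw [if_pos rfl]
          _ ≤ ∑ i' : Fin k, if t i' = t i then c i' else 0 :=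
              Finset.single_le_sum (f := fun i' => if t i' = t i then c i' else 0)
                (fun i' _ => by by_cases h' : t i' = t i <;> simp [h', hc i'])
                (Finset.mem_univ i)
    · have split : ∑ j ∈ J, α j • a j =
          (∑ j ∈ J, (if j ∈ J₀ then (1:ℝ) else 0) • a j) +
          ∑ j ∈ J, (∑ i : Fin k, if t i = j then c i else 0) • a j := by
        rw [← Finset.sum_add_distrib]
        exact Finset.sum_congr rfl fun j _ => by rw [hαdef, add_smul]
      have h1 : (∑ j ∈ J, (if j ∈ J₀ then (1:ℝ) else 0) • a j) = v := by
        rw [hvdef]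
        rw [show (∑ j ∈ J, (if j ∈ J₀ then (1:ℝ) else 0) • a j) = ∑ j ∈ J, if j ∈ J₀ then a j else 0 from
          Finset.sum_congr rfl fun j _ => by split <;> simp]
        rw [Finset.sum_ite_mem, Finset.inter_eq_right.mpr Finset.subset_union_left]
      have h2 : (∑ j ∈ J, (∑ i : Fin k, if t i = j then c i else 0) • a j) = -v := by
        rw [hsum']
        rw [show (∑ j ∈ J, (∑ i : Fin k, if t i = j then c i else 0) • a j)
            = ∑ i : Fin k, ∑ j ∈ J, (if t i = j then c i else 0) • a j from by
          rw [Finset.sum_comm]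
          exact Finset.sum_congr rfl fun j _ => Finset.sum_smul]
        refine Finset.sum_congr rfl fun i _ => ?_
        rw [show (∑ j ∈ J, (if t i = j then c i else 0) • a j)
            = ∑ j ∈ J, if t i = j then c i • a j else 0 from
          Finset.sum_congr rfl fun j _ => by split <;> simp]
        rw [Finset.sum_ite_eq]
        by_cases hci : c i = 0
        · simp [hci]
        · rw [if_pos]
          exact Finset.mem_union_right _ (Finset.mem_image_of_mem t (by simp [hci]))
      rw [split, h1, h2, add_neg_cancel]
    · have him : Submodule.span ℝ (a '' (J : Set I)) = Submodule.span ℝ (Set.range a) := by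
        refine le_antisymm (Submodule.span_le.mpr
          ((Set.image_subset_range a _).trans Submodule.subset_span)) ?_
        · rw [← spanJ₀]
          exact Submodule.span_mono (Set.image_mono (by exact_mod_cast Finset.subset_union_left))
      rw [him]
  · rintro ⟨J, α, hpos, hsum, hrank⟩
    refine ⟨Submodule.span ℝ (Set.range a), Set.Subset.antisymm ?_ (coneOf_subset_span _)⟩
    have hle : Submodule.span ℝ (a '' (J : Set I)) ≤ Submodule.span ℝ (Set.range a) :=
      Submodule.span_mono (Set.image_subset_range a _)
    have heq : Submodule.span ℝ (a '' (J : Set I)) = Submodule.span ℝ (Set.range a) :=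
      Submodule.eq_of_le_of_finrank_eq hle hrank
    intro x hx
    have hx' : x ∈ Submodule.span ℝ (a '' (J : Set I)) := by rw [heq]; exact hx
    rw [Finsupp.mem_span_image_iff_linearCombination] at hx'
    obtain ⟨l, hlsupp, hlx⟩ := hx'
    have hsup : l.support ⊆ J := by
      rw [Finsupp.mem_supported] at hlsupp
      exact_mod_cast hlsupp
    have hx2 : ∑ j ∈ J, l j • a j = x := by
      rw [← hlx, Finsupp.linearCombination_apply, Finsupp.sum]
      exact (Finset.sum_subset hsup fun j _ hj => by
        rw [Finsupp.notMem_support_iff.mp hj, zero_smul]).symm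
    set N : ℝ := ∑ j ∈ J, |l j / α j| with hNdef
    have key : ∀ j ∈ J, 0 ≤ l j + N * α j := by
      intro j hj
      have hαj := hpos j hj
      have h1 : |l j / α j| ≤ N := Finset.single_le_sum (f := fun j => |l j / α j|) (fun i _ => abs_nonneg _) hj
      have h2 : -N ≤ l j / α j := by
        have := neg_abs_le (l j / α j); linarith
      have h3 : -N * α j ≤ l j := (le_div_iff₀ hαj).mp h2
      linarith
    have hrepr : x = ∑ j ∈ J, (l j + N * α j) • a j := by
      rw [show (∑ j ∈ J, (l j + N * α j) • a j)
          = (∑ j ∈ J, l j • a j) + ∑ j ∈ J, (N * α j) • a j from by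
        rw [← Finset.sum_add_distrib]; exact Finset.sum_congr rfl fun j _ => by rw [add_smul]]
      rw [hx2, show (∑ j ∈ J, (N * α j) • a j) = N • ∑ j ∈ J, α j • a j from by
        rw [Finset.smul_sum]; exact Finset.sum_congr rfl fun j _ => by rw [mul_smul]]
      rw [hsum, smul_zero, add_zero]
    rw [hrepr]
    exact finsetSum_mem_coneOf J _ a (fun j hj => key j hj) (fun j _ => Set.mem_range_self j)
end
end

section
/- Let s be a positive integer and {a(i) : i ∈ I} a family of vectors in ℝ^s, where I is an arbitrary (possibly infinite) index set. Suppose there exist a finite subset J ⊆ I and numbers α_j > 0, j ∈ J, such that Σ_{j∈J} α_j a(j) = 0 and dim span({a(j) : j ∈ J}) = dim span({a(i) : i ∈ I}). Then for every finite subset ΔJ ⊆ I there exist numbers ᾱ_j > 0, j ∈ J, such that Σ_{j∈J} ᾱ_j a(j) + Σ_{q∈ΔJ} a(q) = 0. -/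
open Matrix Set Pointwise
open scoped Classical

noncomputable section

/-- If a finite positive combination of the `a(j)`, `j ∈ J`, vanishes with `{a(j) : j ∈ J}`
spanning the same subspace as the whole family, then for every finite `ΔJ ⊆ I` there exist
`ᾱ_j > 0` with `Σ_{j∈J} ᾱ_j a(j) + Σ_{q∈ΔJ} a(q) = 0`. -/
theorem stmt_14 (s : ℕ) (hs : 0 < s) {I : Type*} (a : I → Fin s → ℝ)
    (J : Finset I) (α : I → ℝ) (hα : ∀ j ∈ J, 0 < α j)
    (hsum : (∑ j ∈ J, α j • a j) = 0)
    (hrank : Module.finrank ℝ ↥(Submodule.span ℝ (a '' (J : Set I))) =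
      Module.finrank ℝ ↥(Submodule.span ℝ (Set.range a))) :
    ∀ ΔJ : Finset I, ∃ β : I → ℝ,
      (∀ j ∈ J, 0 < β j) ∧ (∑ j ∈ J, β j • a j) + (∑ q ∈ ΔJ, a q) = 0 := by
  intro ΔJ
  have hle : Submodule.span ℝ (a '' (J : Set I)) ≤ Submodule.span ℝ (Set.range a) :=
    Submodule.span_mono (by rintro _ ⟨i, -, rfl⟩; exact ⟨i, rfl⟩)
  have heq : Submodule.span ℝ (a '' (J : Set I)) = Submodule.span ℝ (Set.range a) :=
    Submodule.eq_of_le_of_finrank_eq hle hrank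
  have hmem : (∑ q ∈ ΔJ, a q) ∈ Submodule.span ℝ (a '' (J : Set I)) := by
    rw [heq]
    exact Submodule.sum_mem _ fun q _ => Submodule.subset_span ⟨q, rfl⟩
  rw [Finsupp.mem_span_image_iff_linearCombination] at hmem
  obtain ⟨l, hl, hrepr⟩ := hmem
  have hsupp : (l.support : Set I) ⊆ (J : Set I) := hl
  have hlsum : (∑ j ∈ J, l j • a j) = ∑ q ∈ ΔJ, a q := by
    rw [← hrepr, Finsupp.linearCombination_apply, Finsupp.sum]
    refine (Finset.sum_subset ?_ ?_).symm
    · intro x hx; exact hsupp hx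
    · intro x _ hx
      simp [Finsupp.notMem_support_iff.mp hx]
  set N : ℝ := 1 + ∑ j ∈ J, |l j| / α j with hN
  refine ⟨fun j => N * α j - l j, ?_, ?_⟩
  · intro j hj
    have hterm : |l j| / α j ≤ ∑ i ∈ J, |l i| / α i :=
      Finset.single_le_sum (f := fun i => |l i| / α i) (fun i hi => div_nonneg (abs_nonneg _) (hα i hi).le) hj
    have hαj := hα j hj
    have h1 : |l j| ≤ (∑ i ∈ J, |l i| / α i) * α j := by
      calc |l j| = (|l j| / α j) * α j := by field_simp
      _ ≤ (∑ i ∈ J, |l i| / α i) * α j := by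
          exact mul_le_mul_of_nonneg_right hterm hαj.le
    have : l j < N * α j := by
      calc l j ≤ |l j| := le_abs_self _
      _ ≤ (∑ i ∈ J, |l i| / α i) * α j := h1
      _ < N * α j := by rw [hN]; nlinarith
    show 0 < N * α j - l j
    linarith
  · have : (∑ j ∈ J, (N * α j - l j) • a j)
        = N • (∑ j ∈ J, α j • a j) - ∑ j ∈ J, l j • a j := by
      rw [Finset.smul_sum, ← Finset.sum_sub_distrib]
      refine Finset.sum_congr rfl fun j hj => ?_
      rw [sub_smul, smul_smul]
    rw [this, hsum, smul_zero, zero_sub, hlsum, neg_add_cancel]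
end
end

section
/- The dimension of span({a(t) : t ∈ T_im}) equals the dimension of span({a(τ(l)+τ(q)) : (l,q) ∈ V_0}), where a(u) := (uᵀA_m u, m = 0,1,...,n) ∈ ℝ^{n+1} for u ∈ ℝ^p. -/
open Matrix Set Pointwise
open scoped Classical

noncomputable section

/-- Auxiliary bilinear values `avecB A u v = (uᵀ A_m v)_m`. -/
def avecB {n p : ℕ} (A : Fin (n + 1) → Matrix (Fin p) (Fin p) ℝ) (u v : Fin p → ℝ) :
    Fin (n + 1) → ℝ :=
  fun m => u ⬝ᵥ (A m).mulVec v

lemma avecB_symm {n p : ℕ} (A : Fin (n + 1) → Matrix (Fin p) (Fin p) ℝ)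
    (hA : ∀ m, (A m).IsSymm) (u v : Fin p → ℝ) : avecB A u v = avecB A v u := by
  funext m
  show u ⬝ᵥ (A m) *ᵥ v = v ⬝ᵥ (A m) *ᵥ u
  simp only [dotProduct, mulVec, Finset.mul_sum]
  rw [Finset.sum_comm]
  exact Finset.sum_congr rfl fun i _ => Finset.sum_congr rfl fun j _ => by
    rw [(hA m).apply]; ring

lemma avec_add_expand {n p : ℕ} (A : Fin (n + 1) → Matrix (Fin p) (Fin p) ℝ)
    (hA : ∀ m, (A m).IsSymm) (u v : Fin p → ℝ) (m : Fin (n + 1)) :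
    avec A (u + v) m = avec A u m + 2 * avecB A u v m + avec A v m := by
  have hs : v ⬝ᵥ (A m) *ᵥ u = u ⬝ᵥ (A m) *ᵥ v := congrFun (avecB_symm A hA v u) m
  simp only [avec, avecB, mulVec_add, dotProduct_add, add_dotProduct]
  rw [hs]; ring

lemma avec_smul_expand {n p : ℕ} (A : Fin (n + 1) → Matrix (Fin p) (Fin p) ℝ)
    (c : ℝ) (u : Fin p → ℝ) (m : Fin (n + 1)) :
    avec A (c • u) m = c * c * avec A u m := by
  simp only [avec, mulVec_smul, smul_dotProduct, dotProduct_smul, smul_eq_mul]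
  ring

lemma avec_sum_expand {n p : ℕ} (A : Fin (n + 1) → Matrix (Fin p) (Fin p) ℝ)
    {ι : Type*} (F : Finset ι) (w : ι → ℝ) (z : ι → Fin p → ℝ) :
    avec A (∑ i ∈ F, w i • z i)
      = ∑ i ∈ F, ∑ i' ∈ F, (w i * w i') • avecB A (z i) (z i') := by
  funext m
  simp only [Finset.sum_apply, Pi.smul_apply, smul_eq_mul]
  rw [show avec A (∑ i ∈ F, w i • z i) m
      = (Matrix.toBilin' (A m)) (∑ i ∈ F, w i • z i) (∑ i ∈ F, w i • z i) from
      (Matrix.toBilin'_apply' _ _ _).symm]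
  rw [LinearMap.BilinForm.sum_left]
  refine Finset.sum_congr rfl fun i _ => ?_
  rw [LinearMap.BilinForm.smul_left, LinearMap.BilinForm.sum_right, Finset.mul_sum]
  refine Finset.sum_congr rfl fun i' _ => ?_
  rw [LinearMap.BilinForm.smul_right, Matrix.toBilin'_apply']
  simp only [avecB, mul_assoc]

/-- `dim span {a(t) : t ∈ T_im} = dim span {a(τ(l)+τ(q)) : (l,q) ∈ V₀}`. -/
theorem stmt_15
    {n p : ℕ} (hp : 1 < p) (hn : 1 ≤ n)
    (A : Fin (n + 1) → Matrix (Fin p) (Fin p) ℝ) (hA : ∀ m, (A m).IsSymm)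
    (hX : (feasX A).Nonempty)
    (hTim : (Tim A).Nonempty)
    (J : Type) [Fintype J] [Nonempty J]
    (τ : J → Fin p → ℝ) (hτinj : Function.Injective τ)
    (hτ : Set.range τ = Set.extremePoints ℝ (convexHull ℝ (Tim A)))
    (S : Type) [Fintype S] (Jset : S → Set J)
    (hJne : ∀ s, (Jset s).Nonempty)
    (hJdisj : ∀ s s', s ≠ s' → Disjoint (Jset s) (Jset s'))
    (hJcover : (⋃ s, Jset s) = Set.univ)
    (hTimU : Tim A = ⋃ s, convexHull ℝ (τ '' Jset s))
    (hPsub : ∀ s, ∀ j ∈ Jset s, {k : Fin p | ∃ j' ∈ Jset s, 0 < τ j' k} ⊆ Mset A τ j) :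
    Module.finrank ℝ ↥(Submodule.span ℝ (avec A '' Tim A)) =
      Module.finrank ℝ ↥(Submodule.span ℝ
        {v : Fin (n + 1) → ℝ | ∃ l q : J, (∃ s, l ∈ Jset s ∧ q ∈ Jset s) ∧
          v = avec A (τ l + τ q)}) := by
  classical
  set V : Set (Fin (n + 1) → ℝ) :=
    {v : Fin (n + 1) → ℝ | ∃ l q : J, (∃ s, l ∈ Jset s ∧ q ∈ Jset s) ∧
      v = avec A (τ l + τ q)} with hVdef
  have hBmem : ∀ s : S, ∀ l ∈ Jset s, ∀ q ∈ Jset s,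
      avecB A (τ l) (τ q) ∈ Submodule.span ℝ V := by
    intro s l hl q hq
    have hid : avecB A (τ l) (τ q) = (1/2 : ℝ) • avec A (τ l + τ q)
        - (1/8 : ℝ) • avec A (τ l + τ l) - (1/8 : ℝ) • avec A (τ q + τ q) := by
      funext m
      have h1 := avec_add_expand A hA (τ l) (τ q) m
      have h2 := avec_add_expand A hA (τ l) (τ l) m
      have h3 := avec_add_expand A hA (τ q) (τ q) m
      have hbl : avecB A (τ l) (τ l) m = avec A (τ l) m := rfl
      have hbq : avecB A (τ q) (τ q) m = avec A (τ q) m := rfl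
      rw [hbl] at h2; rw [hbq] at h3
      simp only [Pi.sub_apply, Pi.smul_apply, smul_eq_mul]
      linarith
    rw [hid]
    refine Submodule.sub_mem _ (Submodule.sub_mem _ ?_ ?_) ?_
    · exact Submodule.smul_mem _ _ (Submodule.subset_span ⟨l, q, ⟨s, hl, hq⟩, rfl⟩)
    · exact Submodule.smul_mem _ _ (Submodule.subset_span ⟨l, l, ⟨s, hl, hl⟩, rfl⟩)
    · exact Submodule.smul_mem _ _ (Submodule.subset_span ⟨q, q, ⟨s, hq, hq⟩, rfl⟩)
  have key : Submodule.span ℝ (avec A '' Tim A) = Submodule.span ℝ V := by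
    apply le_antisymm
    · rw [Submodule.span_le]
      rintro v ⟨t, ht, rfl⟩
      rw [hTimU] at ht
      obtain ⟨s, hts⟩ := Set.mem_iUnion.1 ht
      rw [convexHull_eq] at hts
      obtain ⟨ι, F, w, z, hw0, hw1, hzs, hz⟩ := hts
      rw [Finset.centerMass_eq_of_sum_1 _ _ hw1] at hz
      subst hz
      rw [SetLike.mem_coe, avec_sum_expand A F w z]
      refine Submodule.sum_mem _ fun i hi => Submodule.sum_mem _ fun i' hi' => ?_
      obtain ⟨j, hj, hzj⟩ := hzs i hi
      obtain ⟨j', hj', hzj'⟩ := hzs i' hi'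
      rw [← hzj, ← hzj']
      exact Submodule.smul_mem _ _ (hBmem s j hj j' hj')
    · rw [Submodule.span_le]
      rintro v ⟨l, q, ⟨s, hl, hq⟩, rfl⟩
      have hmid : (1/2 : ℝ) • (τ l + τ q) ∈ Tim A := by
        rw [hTimU]
        refine Set.mem_iUnion.2 ⟨s, ?_⟩
        have hc := (convex_convexHull ℝ (τ '' Jset s))
          (subset_convexHull ℝ _ ⟨l, hl, rfl⟩) (subset_convexHull ℝ _ ⟨q, hq, rfl⟩)
          (by norm_num : (0:ℝ) ≤ 1/2) (by norm_num : (0:ℝ) ≤ 1/2)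
          (by norm_num : (1/2 : ℝ) + 1/2 = 1)
        rwa [smul_add]
      have hv : avec A (τ l + τ q) = (4 : ℝ) • avec A ((1/2 : ℝ) • (τ l + τ q)) := by
        funext m
        rw [Pi.smul_apply, avec_smul_expand, smul_eq_mul]
        ring
      rw [SetLike.mem_coe, hv]
      exact Submodule.smul_mem _ _ (Submodule.subset_span ⟨_, hmid, rfl⟩)
  rw [key]
end
end

section
/- For any t ∈ T_im there exist real numbers β_{lq}, (l,q) ∈ V_0, such that ttᵀ = Σ_{(l,q)∈V_0} β_{lq} (τ(l)+τ(q))(τ(l)+τ(q))ᵀ. -/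
open Matrix Set Pointwise
open scoped Classical

noncomputable section

/-- The conic hull of a set: all finite nonnegative linear combinations of its elements. -/
lemma key_scalar {J : Type} [Fintype J] (a u v : J → ℝ) (ha : ∑ j, a j = 1) :
    ∑ l, ∑ q, (a l * a q / 2 - (if l = q then a l / 4 else 0)) * ((u l + u q) * (v l + v q))
      = (∑ l, a l * u l) * (∑ l, a l * v l) := by
  have hsplit : ∀ l q : J, (a l * a q / 2 - (if l = q then a l / 4 else 0)) * ((u l + u q) * (v l + v q))
      = (a l * a q / 2) * ((u l + u q) * (v l + v q))
        - (if l = q then (a l / 4) * ((u l + u q) * (v l + v q)) else 0) := by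
    intro l q; split_ifs <;> ring
  simp_rw [hsplit, Finset.sum_sub_distrib]
  have h2 : ∀ l : J, ∑ q, (if l = q then (a l / 4) * ((u l + u q) * (v l + v q)) else 0)
      = a l * (u l * v l) := by
    intro l
    rw [Finset.sum_ite_eq (Finset.univ) l (fun q => (a l / 4) * ((u l + u q) * (v l + v q)))]
    simp; ring
  simp_rw [h2]
  have expand : ∀ l q : J, (a l * a q / 2) * ((u l + u q) * (v l + v q))
      = ((a l * (u l * v l)) / 2) * a q + ((a l * u l) / 2) * (a q * v q)
        + ((a l * v l) / 2) * (a q * u q) + (a l / 2) * (a q * (u q * v q)) := by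
    intro l q; ring
  simp_rw [expand, Finset.sum_add_distrib, ← Finset.mul_sum, ← Finset.sum_mul, ← Finset.sum_div, ha]
  have hw : (∑ q : J, a q * (u q * v q)) = ∑ l : J, a l * (u l * v l) := rfl
  ring

lemma extract {p : ℕ} {J : Type} [Fintype J] (τ : J → Fin p → ℝ)
    (hτinj : Function.Injective τ) (K : Set J) (t : Fin p → ℝ)
    (ht : t ∈ convexHull ℝ (τ '' K)) :
    ∃ α : J → ℝ, (∀ j, 0 ≤ α j) ∧ (∀ j, j ∉ K → α j = 0) ∧ (∑ j, α j = 1) ∧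
      t = ∑ j, α j • τ j := by
  have hfin : (τ '' K).Finite := (Set.toFinite K).image τ
  rw [Set.Finite.convexHull_eq hfin] at ht
  obtain ⟨w, hw0, hw1, hwc⟩ := ht
  have hKfin : K.Finite := Set.toFinite K
  have himg : hfin.toFinset = hKfin.toFinset.image τ := by
    apply Finset.ext; intro y
    simp only [Set.Finite.mem_toFinset, Finset.mem_image, Set.mem_image]
  have hfilt : (Finset.filter (· ∈ K) (Finset.univ : Finset J)) = hKfin.toFinset := by
    apply Finset.ext; intro j; simp only [Finset.mem_filter, Finset.mem_univ, true_and, Set.Finite.mem_toFinset]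
  refine ⟨fun j => if j ∈ K then w (τ j) else 0, ?_, ?_, ?_, ?_⟩
  · intro j
    by_cases h : j ∈ K
    · simp only [h, if_true]; exact hw0 _ ⟨j, h, rfl⟩
    · simp [h]
  · intro j hj; simp [hj]
  · show (∑ j : J, if j ∈ K then w (τ j) else 0) = 1
    rw [← Finset.sum_filter, hfilt,
      ← Finset.sum_image (g := τ) (f := w) (fun x _ y _ h => hτinj h), ← himg]
    exact hw1
  · have hcm : hfin.toFinset.centerMass w id = ∑ y ∈ hfin.toFinset, w y • y := by
      rw [Finset.centerMass_eq_of_sum_1 _ _ hw1]; rfl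
    rw [← hwc, hcm, himg, Finset.sum_image (g := τ) (fun x _ y _ h => hτinj h)]
    show _ = ∑ j : J, (if j ∈ K then w (τ j) else 0) • τ j
    simp_rw [ite_smul, zero_smul]
    rw [← Finset.sum_filter, hfilt]

/-- For any `t ∈ T_im`, `ttᵀ` is a linear combination of the matrices
`(τ(l)+τ(q))(τ(l)+τ(q))ᵀ`, `(l,q) ∈ V₀`. -/
theorem stmt_16
    {n p : ℕ} (hp : 1 < p) (hn : 1 ≤ n)
    (A : Fin (n + 1) → Matrix (Fin p) (Fin p) ℝ) (hA : ∀ m, (A m).IsSymm)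
    (hX : (feasX A).Nonempty)
    (hTim : (Tim A).Nonempty)
    (J : Type) [Fintype J] [Nonempty J]
    (τ : J → Fin p → ℝ) (hτinj : Function.Injective τ)
    (hτ : Set.range τ = Set.extremePoints ℝ (convexHull ℝ (Tim A)))
    (S : Type) [Fintype S] (Jset : S → Set J)
    (hJne : ∀ s, (Jset s).Nonempty)
    (hJdisj : ∀ s s', s ≠ s' → Disjoint (Jset s) (Jset s'))
    (hJcover : (⋃ s, Jset s) = Set.univ)
    (hTimU : Tim A = ⋃ s, convexHull ℝ (τ '' Jset s))
    (hPsub : ∀ s, ∀ j ∈ Jset s, {k : Fin p | ∃ j' ∈ Jset s, 0 < τ j' k} ⊆ Mset A τ j)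
    (t : Fin p → ℝ) (ht : t ∈ Tim A) :
    ∃ β : J → J → ℝ,
      (∀ l q : J, ¬(∃ s, l ∈ Jset s ∧ q ∈ Jset s) → β l q = 0) ∧
      vecMulVec t t =
        ∑ l : J, ∑ q : J, β l q • vecMulVec (τ l + τ q) (τ l + τ q) := by
  have ht' : t ∈ ⋃ s, convexHull ℝ (τ '' Jset s) := hTimU ▸ ht
  obtain ⟨s, hs⟩ := Set.mem_iUnion.mp ht'
  obtain ⟨α, hα0, hαsupp, hα1, hteq⟩ := extract τ hτinj (Jset s) t hs
  refine ⟨fun l q => α l * α q / 2 - (if l = q then α l / 4 else 0), ?_, ?_⟩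
  · intro l q h
    by_cases hl : α l = 0
    · simp [hl]
    by_cases hq : α q = 0
    · rcases eq_or_ne l q with rfl | hne
      · exact absurd hq hl
      · simp [hq, hne]
    exfalso
    apply h
    refine ⟨s, ?_, ?_⟩
    · by_contra hc; exact hl (hαsupp l hc)
    · by_contra hc; exact hq (hαsupp q hc)
  · ext i k
    simp only [Matrix.sum_apply, Matrix.smul_apply, vecMulVec_apply, Pi.add_apply,
      smul_eq_mul]
    have hti : ∀ i, t i = ∑ j, α j * τ j i := by
      intro i
      rw [hteq]
      simp [Finset.sum_apply]
    rw [hti i, hti k]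
    exact (key_scalar α (fun j => τ j i) (fun j => τ j k) hα1).symm
end
end
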